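/- arXiv:1702.04915 — 2 statements merged into one kernel-verified Lean document; each statement's English description precedes it below -/
import Mathlib

section
/- For every λ > 0, with α = log(3/2) − λ, one has the identity (as elements of [0,∞]): G(λ) = (e^α/3)(1/2 + e^{−λ}/4) + (1/2)(1 − e^{−λ}/2) · E[ e^{ατ − λ(|U_1| + ⋯ + |U_τ|)} ]. -/
open MeasureTheory ProbabilityTheory Filter
open scoped ENNReal NNReal

/-- The effective random walk `V_n = U_1 + ⋯ + U_n` built from the increments
`U_0, U_1, …` (here `U i` plays the role of `U_{i+1}`). -/
def Vwalk {Ω : Type*} (U : ℕ → Ω → ℤ) (n : ℕ) (ω : Ω) : ℤ :=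
  ∑ i ∈ Finset.range n, U i ω

/-- The first time `τ` at which the effective walk returns to or crosses the origin:
`τ = 1` if `V_1 = 0`, and `τ = min{i ≥ 2 : V_{i-1} V_i ≤ 0}` otherwise. -/
noncomputable def tauCross {Ω : Type*} (U : ℕ → Ω → ℤ) (ω : Ω) : ℕ :=
  if Vwalk U 1 ω = 0 then 1
  else sInf {i : ℕ | 2 ≤ i ∧ Vwalk U (i - 1) ω * Vwalk U i ω ≤ 0}

/-- `|U_1| + ⋯ + |U_n|`, the total vertical displacement of the first `n` increments. -/
def absSum {Ω : Type*} (U : ℕ → Ω → ℤ) (n : ℕ) (ω : Ω) : ℕ :=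
  ∑ i ∈ Finset.range n, (U i ω).natAbs

/-- `U` is an i.i.d. sequence with the discrete Laplace law
`P(U_1 = x) = (1/3)·2^{-|x|}`. -/
structure IsLaplaceIID {Ω : Type*} [MeasurableSpace Ω] (μ : Measure Ω)
    (U : ℕ → Ω → ℤ) : Prop where
  meas : ∀ i, Measurable (U i)
  indep : iIndepFun U μ
  law : ∀ i, ∀ x : ℤ, μ {ω | U i ω = x} = ENNReal.ofReal ((1 / 3) * (1 / 2) ^ x.natAbs)

/-- `G(λ) = E[ e^{ατ − λ(|U_1|+⋯+|U_τ|)} 1_{V_1 ≥ 0, V_τ = 0} ] ∈ [0,∞]`,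
with `α = log(3/2) − λ`. -/
noncomputable def GG {Ω : Type*} [MeasurableSpace Ω] (μ : Measure Ω)
    (U : ℕ → Ω → ℤ) (lam : ℝ) : ℝ≥0∞ :=
  ∫⁻ ω, ENNReal.ofReal
    (if 0 ≤ Vwalk U 1 ω ∧ Vwalk U (tauCross U ω) ω = 0 then
      Real.exp ((Real.log (3 / 2) - lam) * (tauCross U ω) -
        lam * (absSum U (tauCross U ω) ω))
    else 0) ∂μ

namespace GDecompAux
attribute [local instance] Classical.propDecidable
noncomputable section

def pz (x : ℤ) : ℝ≥0∞ := ENNReal.ofReal ((1 / 3) * (1 / 2) ^ x.natAbs)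

def Vx (x : ℕ → ℤ) (n : ℕ) : ℤ := ∑ i ∈ Finset.range n, x i

lemma Vwalk_eq {Ω : Type*} (U : ℕ → Ω → ℤ) (n : ℕ) (ω : Ω) :
    Vwalk U n ω = Vx (fun i => U i ω) n := rfl

lemma Vx_one (x : ℕ → ℤ) : Vx x 1 = x 0 := Finset.sum_range_one x

lemma Vx_succ (x : ℕ → ℤ) (n : ℕ) : Vx x (n + 1) = Vx x n + x n :=
  Finset.sum_range_succ _ _

/-- The crossing condition: `τ = n` is determined by the first `n` increments. -/
def Dc (n : ℕ) (x : ℕ → ℤ) : Prop :=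
  (n = 1 ∧ x 0 = 0) ∨
  (2 ≤ n ∧ x 0 ≠ 0 ∧ (∀ i, 2 ≤ i → i < n → 0 < Vx x (i - 1) * Vx x i) ∧
    Vx x (n - 1) * Vx x n ≤ 0)

lemma Vx_congr {x y : ℕ → ℤ} {n k : ℕ} (hk : k ≤ n) (h : ∀ i < n, x i = y i) :
    Vx x k = Vx y k :=
  Finset.sum_congr rfl fun i hi => h i (lt_of_lt_of_le (Finset.mem_range.1 hi) hk)

lemma Dc_congr {x y : ℕ → ℤ} {n : ℕ} (h : ∀ i < n, x i = y i) : Dc n x ↔ Dc n y := by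
  constructor <;> intro hd
  · rcases hd with ⟨h1, h0⟩ | ⟨h2, h0, hmin, hcr⟩
    · exact Or.inl ⟨h1, (h 0 (by omega)).symm ▸ h0⟩
    · refine Or.inr ⟨h2, fun hy => h0 ((h 0 (by omega)).trans hy), fun i hi hin => ?_, ?_⟩
      · rw [← Vx_congr (by omega) h, ← Vx_congr (le_of_lt hin) h]; exact hmin i hi hin
      · rw [← Vx_congr (by omega) h, ← Vx_congr le_rfl h]; exact hcr
  · rcases hd with ⟨h1, h0⟩ | ⟨h2, h0, hmin, hcr⟩
    · exact Or.inl ⟨h1, (h 0 (by omega)) ▸ h0⟩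
    · refine Or.inr ⟨h2, fun hy => h0 ((h 0 (by omega)) ▸ hy), fun i hi hin => ?_, ?_⟩
      · rw [Vx_congr (by omega) h, Vx_congr (le_of_lt hin) h]; exact hmin i hi hin
      · rw [Vx_congr (by omega) h, Vx_congr le_rfl h]; exact hcr

lemma tau_eq_of_Dc {Ω : Type*} (U : ℕ → Ω → ℤ) (ω : Ω) {n : ℕ}
    (h : Dc n (fun i => U i ω)) : tauCross U ω = n := by
  rcases h with ⟨h1, h0⟩ | ⟨h2, h0, hmin, hcr⟩
  · rw [tauCross, if_pos (by rw [Vwalk_eq, Vx_one]; exact h0)]; omega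
  · rw [tauCross, if_neg (by rw [Vwalk_eq, Vx_one]; exact h0)]
    have hnmem : n ∈ {i : ℕ | 2 ≤ i ∧ Vwalk U (i - 1) ω * Vwalk U i ω ≤ 0} := ⟨h2, hcr⟩
    refine le_antisymm (Nat.sInf_le hnmem) ?_
    by_contra hlt
    push_neg at hlt
    have hmem := Nat.sInf_mem ⟨n, hnmem⟩
    have := hmin _ hmem.1 hlt
    exact absurd hmem.2 (not_le.2 this)

lemma Dc_tau {Ω : Type*} (U : ℕ → Ω → ℤ) (ω : Ω)
    (h : Vwalk U 1 ω = 0 ∨ ∃ i, 2 ≤ i ∧ Vwalk U (i - 1) ω * Vwalk U i ω ≤ 0) :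
    Dc (tauCross U ω) (fun i => U i ω) := by
  by_cases h1 : Vwalk U 1 ω = 0
  · rw [tauCross, if_pos h1]
    exact Or.inl ⟨rfl, by simpa [Vwalk, Finset.sum_range_one] using h1⟩
  · rcases h with h | ⟨i, hi⟩
    · exact absurd h h1
    rw [tauCross, if_neg h1]
    have hne : {j : ℕ | 2 ≤ j ∧ Vwalk U (j - 1) ω * Vwalk U j ω ≤ 0}.Nonempty := ⟨i, hi⟩
    have hmem := Nat.sInf_mem hne
    refine Or.inr ⟨hmem.1, by simpa [Vwalk, Finset.sum_range_one] using h1, fun j hj hjlt => ?_,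
      hmem.2⟩
    by_contra hle
    push_neg at hle
    have hjmem : j ∈ {j : ℕ | 2 ≤ j ∧ Vwalk U (j - 1) ω * Vwalk U j ω ≤ 0} := ⟨hj, hle⟩
    exact absurd (Nat.sInf_le hjmem) (by omega)

variable {Ω : Type*} [MeasurableSpace Ω] {μ : Measure Ω} {U : ℕ → Ω → ℤ}

def ext {n : ℕ} (u : Fin n → ℤ) : ℕ → ℤ := fun i => if h : i < n then u ⟨i, h⟩ else 0

def cyl (U : ℕ → Ω → ℤ) (n : ℕ) (u : Fin n → ℤ) : Set Ω := {ω | ∀ i : Fin n, U i ω = u i}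

lemma measurableSet_cyl (hm : ∀ i, Measurable (U i)) (n : ℕ) (u : Fin n → ℤ) :
    MeasurableSet (cyl U n u) := by
  have : cyl U n u = ⋂ i : Fin n, (U i) ⁻¹' {u i} := by
    ext ω; simp [cyl, Set.mem_iInter]
  rw [this]
  exact MeasurableSet.iInter fun i => (hm i) (measurableSet_singleton _)

lemma meas_cyl (hU : IsLaplaceIID μ U) (n : ℕ) (u : Fin n → ℤ) :
    μ (cyl U n u) = ∏ i : Fin n, pz (u i) := by
  classical
  set s : ℕ → Set Ω := fun i => if h : i < n then U i ⁻¹' {ext u i} else Set.univ with hs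
  have hcyl : cyl U n u = ⋂ i ∈ Finset.range n, s i := by
    ext ω
    simp only [cyl, Set.mem_setOf_eq, Set.mem_iInter, Finset.mem_range, hs]
    constructor
    · intro h i hi
      rw [dif_pos hi]
      simp only [Set.mem_preimage, Set.mem_singleton_iff, ext, dif_pos hi]
      exact h ⟨i, hi⟩
    · intro h i
      have := h i i.isLt
      rw [dif_pos i.isLt] at this
      simpa [ext, dif_pos i.isLt] using this
  have hmeas : ∀ i ∈ Finset.range n,
      MeasurableSet[MeasurableSpace.comap (U i) inferInstance] (s i) := by
    intro i hi
    rw [Finset.mem_range] at hi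
    simp only [hs, dif_pos hi]
    exact ⟨{ext u i}, measurableSet_singleton _, rfl⟩
  rw [hcyl, hU.indep.meas_biInter hmeas]
  have hval : ∀ i ∈ Finset.range n, μ (s i) = pz (ext u i) := by
    intro i hi
    rw [Finset.mem_range] at hi
    simp only [hs, dif_pos hi]
    have : U i ⁻¹' {ext u i} = {ω | U i ω = ext u i} := by ext ω; simp
    rw [this, hU.law i (ext u i)]; rfl
  rw [Finset.prod_congr rfl hval]
  rw [← Fin.prod_univ_eq_prod_range (fun i => pz (ext u i)) n]
  refine Finset.prod_congr rfl fun i _ => ?_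
  simp [ext, dif_pos i.isLt]

abbrev Idx := Σ n : ℕ, (Fin n → ℤ)

def wgt (a : Idx) : ℝ≥0∞ := ∏ i, pz (a.2 i)

lemma lintegral_tau_eq_tsum (hU : IsLaplaceIID μ U)
    (hfin : ∀ᵐ ω ∂μ, Vwalk U 1 ω = 0 ∨
      ∃ i, 2 ≤ i ∧ Vwalk U (i - 1) ω * Vwalk U i ω ≤ 0)
    (c : ℕ → (ℕ → ℤ) → ℝ≥0∞)
    (hc : ∀ n x y, 1 ≤ n → (∀ i < n, x i = y i) → c n x = c n y) :
    ∫⁻ ω, c (tauCross U ω) (fun i => U i ω) ∂μ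
      = ∑' a : Idx, if Dc a.1 (ext a.2) then c a.1 (ext a.2) * wgt a else 0 := by
  classical
  set A : Idx → Set Ω := fun a => if Dc a.1 (ext a.2) then cyl U a.1 a.2 else ∅ with hA
  have hAm : ∀ a, MeasurableSet (A a) := by
    intro a
    show MeasurableSet (if Dc a.1 (ext a.2) then cyl U a.1 a.2 else ∅)
    split_ifs
    · exact measurableSet_cyl hU.meas _ _
    · exact MeasurableSet.empty
  have hae : ∀ᵐ ω ∂μ, c (tauCross U ω) (fun i => U i ω)
      = ∑' a : Idx, (A a).indicator (fun _ => c a.1 (ext a.2)) ω := by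
    filter_upwards [hfin] with ω hω
    have hD := Dc_tau U ω hω
    set x : ℕ → ℤ := fun i => U i ω with hx
    set n := tauCross U ω with hn
    set a₀ : Idx := ⟨n, fun i => x i⟩ with ha₀
    have hn1 : 1 ≤ n := by rcases hD with ⟨h, _⟩ | ⟨h, _⟩ <;> omega
    have hagree : ∀ i < n, ext (a₀.2) i = x i := by
      intro i hi
      simp [ext, ha₀, dif_pos hi]
      rfl
    have hDa₀ : Dc a₀.1 (ext a₀.2) := (Dc_congr hagree).2 hD
    have hmem : ω ∈ A a₀ := by
      rw [hA]
      simp only [if_pos hDa₀]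
      exact fun i => rfl
    rw [tsum_eq_single a₀ ?_]
    · rw [Set.indicator_of_mem hmem]
      exact hc n x (ext a₀.2) hn1 fun i hi => (hagree i hi).symm
    · intro a ha
      by_cases hmem' : ω ∈ A a
      · exfalso
        apply ha
        have hmem'' : ω ∈ (if Dc a.1 (ext a.2) then cyl U a.1 a.2 else ∅) := hmem'
        clear hmem'
        rename' hmem'' => hmem'
        by_cases hd : Dc a.1 (ext a.2)
        · rw [if_pos hd] at hmem'
          have hag : ∀ i < a.1, ext a.2 i = x i := by
            intro i hi
            simp only [ext, dif_pos hi, hx]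
            exact (hmem' ⟨i, hi⟩).symm
          have : Dc a.1 x := (Dc_congr hag).1 hd
          have htau : tauCross U ω = a.1 := tau_eq_of_Dc U ω this
          obtain ⟨m, v⟩ := a
          have hm : m = n := (hn.trans htau).symm
          subst hm
          congr 1
          funext i
          exact (hmem' i).symm
        · rw [if_neg hd] at hmem'; exact absurd hmem' (Set.notMem_empty ω)
      · exact Set.indicator_of_notMem hmem' _
  rw [lintegral_congr_ae hae,
    lintegral_tsum fun a => (measurable_const.indicator (hAm a)).aemeasurable]
  refine tsum_congr fun a => ?_
  rw [lintegral_indicator_const (hAm a)]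
  have hAa : A a = if Dc a.1 (ext a.2) then cyl U a.1 a.2 else ∅ := rfl
  by_cases hd : Dc a.1 (ext a.2)
  · rw [if_pos hd, hAa, if_pos hd, meas_cyl hU a.1 a.2]
    rfl
  · rw [if_neg hd, hAa, if_neg hd]
    simp

def Sx (x : ℕ → ℤ) (n : ℕ) : ℕ := ∑ i ∈ Finset.range n, (x i).natAbs

lemma Sx_congr {x y : ℕ → ℤ} {n k : ℕ} (hk : k ≤ n) (h : ∀ i < n, x i = y i) :
    Sx x k = Sx y k :=
  Finset.sum_congr rfl fun i hi => by rw [h i (lt_of_lt_of_le (Finset.mem_range.1 hi) hk)]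

/-- "No crossing within the first `k` steps and `V_1 ≠ 0`". -/
def NC (k : ℕ) (x : ℕ → ℤ) : Prop :=
  x 0 ≠ 0 ∧ ∀ i, 2 ≤ i → i ≤ k → 0 < Vx x (i - 1) * Vx x i

lemma Dc_zero (x : ℕ → ℤ) : ¬ Dc 0 x := by
  rintro (⟨h, -⟩ | ⟨h, -⟩) <;> omega

lemma Dc_one (x : ℕ → ℤ) : Dc 1 x ↔ x 0 = 0 := by
  constructor
  · rintro (⟨-, h⟩ | ⟨h, -⟩)
    · exact h
    · omega
  · exact fun h => Or.inl ⟨rfl, h⟩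

lemma Dc_two (m : ℕ) (x : ℕ → ℤ) :
    Dc (m + 2) x ↔ NC (m + 1) x ∧ Vx x (m + 1) * Vx x (m + 2) ≤ 0 := by
  constructor
  · rintro (⟨h, -⟩ | ⟨-, h0, hm, hc⟩)
    · omega
    · refine ⟨⟨h0, fun i h2 hik => hm i h2 (by omega)⟩, ?_⟩
      simpa using hc
  · rintro ⟨⟨h0, hm⟩, hc⟩
    refine Or.inr ⟨by omega, h0, fun i h2 hik => hm i h2 (by omega), ?_⟩
    simpa using hc

lemma NC_pos {k : ℕ} {x : ℕ → ℤ} (h : NC k x) (h0 : 0 < x 0) :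
    ∀ i, 1 ≤ i → i ≤ k → 0 < Vx x i := by
  intro i hi1 hik
  induction i with
  | zero => omega
  | succ j ih =>
    rcases Nat.eq_or_lt_of_le hi1 with h1 | h1
    · rw [← h1, Vx_one]; exact h0
    · have hj : 0 < Vx x j := ih (by omega) (by omega)
      have hp := h.2 (j + 1) (by omega) hik
      simp only [Nat.add_sub_cancel] at hp
      by_contra hle
      push_neg at hle
      exact absurd hp (not_lt.2 (mul_nonpos_of_nonneg_of_nonpos hj.le hle))

lemma ext_snoc_lt {m : ℕ} (u : Fin (m + 1) → ℤ) (cz : ℤ) {i : ℕ} (hi : i < m + 1) :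
    ext (Fin.snoc u cz : Fin (m + 2) → ℤ) i = ext u i := by
  simp only [ext, dif_pos (show i < m + 2 by omega), dif_pos hi]
  have h : (⟨i, show i < m + 2 by omega⟩ : Fin (m + 2)) = Fin.castSucc ⟨i, hi⟩ := rfl
  rw [h, Fin.snoc_castSucc]

lemma ext_snoc_last {m : ℕ} (u : Fin (m + 1) → ℤ) (cz : ℤ) :
    ext (Fin.snoc u cz : Fin (m + 2) → ℤ) (m + 1) = cz := by
  simp only [ext, dif_pos (show m + 1 < m + 2 by omega)]
  have h : (⟨m + 1, show m + 1 < m + 2 by omega⟩ : Fin (m + 2)) = Fin.last (m + 1) := rfl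
  rw [h, Fin.snoc_last]

lemma Vx_ext_snoc {m : ℕ} (u : Fin (m + 1) → ℤ) (cz : ℤ) {k : ℕ} (hk : k ≤ m + 1) :
    Vx (ext (Fin.snoc u cz : Fin (m + 2) → ℤ)) k = Vx (ext u) k :=
  Vx_congr le_rfl fun i hi => ext_snoc_lt u cz (by omega)

lemma Vx_ext_snoc_top {m : ℕ} (u : Fin (m + 1) → ℤ) (cz : ℤ) :
    Vx (ext (Fin.snoc u cz : Fin (m + 2) → ℤ)) (m + 2) = Vx (ext u) (m + 1) + cz := by
  rw [Vx_succ, Vx_ext_snoc u cz le_rfl, ext_snoc_last]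

lemma Sx_ext_snoc_top {m : ℕ} (u : Fin (m + 1) → ℤ) (cz : ℤ) :
    Sx (ext (Fin.snoc u cz : Fin (m + 2) → ℤ)) (m + 2) = Sx (ext u) (m + 1) + cz.natAbs := by
  rw [Sx, Finset.sum_range_succ, ext_snoc_last]
  congr 1
  exact Sx_congr le_rfl fun i hi => ext_snoc_lt u cz (by omega)

lemma ext_neg {n : ℕ} (u : Fin n → ℤ) : ext (-u) = -(ext u) := by
  funext i
  simp only [ext, Pi.neg_apply]
  split_ifs <;> simp

lemma Vx_neg (x : ℕ → ℤ) (n : ℕ) : Vx (-x) n = -Vx x n := by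
  simp [Vx, Finset.sum_neg_distrib]

lemma Sx_neg (x : ℕ → ℤ) (n : ℕ) : Sx (-x) n = Sx x n := by
  simp [Sx]

lemma Dc_neg (n : ℕ) (x : ℕ → ℤ) : Dc n (-x) ↔ Dc n x := by
  have key : ∀ y : ℕ → ℤ, Dc n y → Dc n (-y) := by
    intro y hy
    rcases hy with ⟨h1, h0⟩ | ⟨h2, h0, hm, hc⟩
    · exact Or.inl ⟨h1, by simp [h0]⟩
    · refine Or.inr ⟨h2, by simpa using h0, fun i hi hin => ?_, ?_⟩
      · rw [Vx_neg, Vx_neg, neg_mul_neg]; exact hm i hi hin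
      · rw [Vx_neg, Vx_neg, neg_mul_neg]; exact hc
  constructor
  · intro h; simpa using key _ h
  · exact key x


lemma NC_congr {x y : ℕ → ℤ} {k : ℕ} (hk : 1 ≤ k) (h : ∀ i < k, x i = y i) :
    NC k x ↔ NC k y := by
  have h0 : x 0 = y 0 := h 0 (by omega)
  constructor <;> rintro ⟨ha, hb⟩
  · exact ⟨h0 ▸ ha, fun i h2 hik => by
      rw [← Vx_congr (show i - 1 ≤ k by omega) h, ← Vx_congr hik h]; exact hb i h2 hik⟩
  · exact ⟨h0.symm ▸ ha, fun i h2 hik => by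
      rw [Vx_congr (show i - 1 ≤ k by omega) h, Vx_congr hik h]; exact hb i h2 hik⟩

def vval (lam : ℝ) (n : ℕ) (x : ℕ → ℤ) : ℝ :=
  Real.exp ((Real.log (3 / 2) - lam) * n - lam * (Sx x n))

lemma vval_pos (lam : ℝ) (n : ℕ) (x : ℕ → ℤ) : 0 < vval lam n x := Real.exp_pos _


def iterm (lam : ℝ) (a : Idx) : ℝ≥0∞ :=
  if Dc a.1 (ext a.2) then ENNReal.ofReal (vval lam a.1 (ext a.2)) * wgt a else 0
def gterm (lam : ℝ) (a : Idx) : ℝ≥0∞ :=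
  if Dc a.1 (ext a.2) ∧ 0 ≤ Vx (ext a.2) 1 ∧ Vx (ext a.2) a.1 = 0 then
    ENNReal.ofReal (vval lam a.1 (ext a.2)) * wgt a else 0

lemma wgt_snoc {m : ℕ} (u : Fin (m + 1) → ℤ) (cz : ℤ) :
    wgt ⟨m + 2, Fin.snoc u cz⟩ = wgt ⟨m + 1, u⟩ * pz cz := by
  show (∏ i : Fin (m + 2), pz ((Fin.snoc u cz : Fin (m + 2) → ℤ) i)) = _
  rw [Fin.prod_univ_castSucc]
  simp [Fin.snoc_castSucc, Fin.snoc_last, wgt]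

/-- The one-step weight as a function of the last increment. -/
def FF (lam : ℝ) (m : ℕ) (u : Fin (m + 1) → ℤ) (cz : ℤ) : ℝ≥0∞ :=
  wgt ⟨m + 1, u⟩ * ENNReal.ofReal
    (vval lam (m + 2) (ext (Fin.snoc u cz : Fin (m + 2) → ℤ)) *
      ((1 / 3) * (1 / 2) ^ cz.natAbs))

lemma iterm_snoc (lam : ℝ) {m : ℕ} (u : Fin (m + 1) → ℤ) (cz : ℤ) :
    iterm lam ⟨m + 2, Fin.snoc u cz⟩ =
      if Dc (m + 2) (ext (Fin.snoc u cz : Fin (m + 2) → ℤ)) then FF lam m u cz else 0 := by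
  rw [iterm, FF, wgt_snoc, ENNReal.ofReal_mul (vval_pos _ _ _).le, pz]
  ring_nf

lemma gterm_snoc (lam : ℝ) {m : ℕ} (u : Fin (m + 1) → ℤ) (cz : ℤ) :
    gterm lam ⟨m + 2, Fin.snoc u cz⟩ =
      if Dc (m + 2) (ext (Fin.snoc u cz : Fin (m + 2) → ℤ)) ∧
          0 ≤ Vx (ext (Fin.snoc u cz : Fin (m + 2) → ℤ)) 1 ∧
          Vx (ext (Fin.snoc u cz : Fin (m + 2) → ℤ)) (m + 2) = 0 then FF lam m u cz else 0 := by
  rw [gterm, FF, wgt_snoc, ENNReal.ofReal_mul (vval_pos _ _ _).le, pz]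
  ring_nf

def itail (lam : ℝ) (m : ℕ) (u : Fin (m + 1) → ℤ) : ℝ≥0∞ :=
  ∑' cz : ℤ, iterm lam ⟨m + 2, Fin.snoc u cz⟩
def gtail (lam : ℝ) (m : ℕ) (u : Fin (m + 1) → ℤ) : ℝ≥0∞ :=
  ∑' cz : ℤ, gterm lam ⟨m + 2, Fin.snoc u cz⟩


lemma exp_geom_aux (B lam : ℝ) (s w k : ℕ) :
    Real.exp (B - lam * ((s + (w + k) : ℕ) : ℝ)) * ((1 / 3) * (1 / 2 : ℝ) ^ (w + k))
      = Real.exp (B - lam * ((s + w : ℕ) : ℝ)) * ((1 / 3) * (1 / 2 : ℝ) ^ w) *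
        (Real.exp (-lam) / 2) ^ k := by
  have h : Real.exp (B - lam * ((s + (w + k) : ℕ) : ℝ))
      = Real.exp (B - lam * ((s + w : ℕ) : ℝ)) * Real.exp (-lam) ^ k := by
    rw [← Real.exp_nat_mul, ← Real.exp_add]
    congr 1
    push_cast
    ring
  rw [h, pow_add, div_pow]
  ring

lemma core (lam : ℝ) (hlam : 0 < lam) (m : ℕ) (u : Fin (m + 1) → ℤ) :
    gtail lam m u = ENNReal.ofReal (1 - Real.exp (-lam) / 2) *
      (if 0 < ext u 0 then itail lam m u else 0) := by
  have hq0 : (0:ℝ) ≤ Real.exp (-lam) / 2 := by positivity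
  have hq1 : Real.exp (-lam) / 2 < 1 := by
    have := Real.exp_lt_one_iff.2 (neg_lt_zero.2 hlam)
    linarith
  by_cases hpos : 0 < ext u 0
  case neg =>
    rw [if_neg hpos, mul_zero, gtail]
    refine ENNReal.tsum_eq_zero.2 fun cz => ?_
    rw [gterm_snoc, if_neg]
    rintro ⟨hDc, hge, -⟩
    rw [Vx_one, ext_snoc_lt u cz (by omega)] at hge
    have hne : ext (Fin.snoc u cz : Fin (m + 2) → ℤ) 0 ≠ 0 := by
      rcases hDc with ⟨h, -⟩ | ⟨-, h, -⟩
      · omega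
      · exact h
    rw [ext_snoc_lt u cz (by omega)] at hne
    exact hpos (lt_of_le_of_ne hge (Ne.symm hne))
  case pos =>
    rw [if_pos hpos]
    by_cases hNC : NC (m + 1) (ext u)
    case neg =>
      have hno : ∀ cz : ℤ, ¬ Dc (m + 2) (ext (Fin.snoc u cz : Fin (m + 2) → ℤ)) := by
        intro cz hDc
        rw [Dc_two] at hDc
        exact hNC ((NC_congr (by omega) fun i hi => ext_snoc_lt u cz (by omega)).1 hDc.1)
      have hi0 : itail lam m u = 0 := by
        refine ENNReal.tsum_eq_zero.2 fun cz => ?_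
        rw [iterm_snoc, if_neg (hno cz)]
      have hg0 : gtail lam m u = 0 := by
        refine ENNReal.tsum_eq_zero.2 fun cz => ?_
        rw [gterm_snoc, if_neg (fun h => hno cz h.1)]
      rw [hi0, hg0, mul_zero]
    case pos =>
      set V : ℤ := Vx (ext u) (m + 1) with hV
      have hVpos : 0 < V := NC_pos hNC hpos (m + 1) (by omega) le_rfl
      have hDchar : ∀ cz : ℤ, Dc (m + 2) (ext (Fin.snoc u cz : Fin (m + 2) → ℤ)) ↔ cz ≤ -V := by
        intro cz
        rw [Dc_two, Vx_ext_snoc u cz le_rfl, Vx_ext_snoc_top, ← hV]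
        constructor
        · rintro ⟨-, hc⟩
          by_contra hgt
          push_neg at hgt
          have : 0 < V + cz := by omega
          exact absurd hc (not_le.2 (mul_pos hVpos this))
        · intro hle
          refine ⟨(NC_congr (by omega) fun i hi => (ext_snoc_lt u cz (by omega)).symm).1 hNC, ?_⟩
          exact mul_nonpos_of_nonneg_of_nonpos hVpos.le (by omega)
      have hGchar : ∀ cz : ℤ,
          (Dc (m + 2) (ext (Fin.snoc u cz : Fin (m + 2) → ℤ)) ∧
            0 ≤ Vx (ext (Fin.snoc u cz : Fin (m + 2) → ℤ)) 1 ∧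
            Vx (ext (Fin.snoc u cz : Fin (m + 2) → ℤ)) (m + 2) = 0) ↔ cz = -V := by
        intro cz
        rw [hDchar, Vx_one, ext_snoc_lt u cz (by omega), Vx_ext_snoc_top, ← hV]
        constructor
        · rintro ⟨h1, -, h3⟩; omega
        · intro h; exact ⟨by omega, hpos.le, by omega⟩
      -- gtail = FF at the exact hitting value
      have hgt : gtail lam m u = FF lam m u (-V) := by
        rw [gtail, tsum_eq_single (-V) ?_]
        · rw [gterm_snoc, if_pos ((hGchar (-V)).2 rfl)]
        · intro cz hcz
          rw [gterm_snoc, if_neg (fun h => hcz ((hGchar cz).1 h))]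
      -- itail = geometric series
      set r : ℝ≥0∞ := ENNReal.ofReal (Real.exp (-lam) / 2) with hr
      have hFF : ∀ k : ℕ, FF lam m u (-V - k) = FF lam m u (-V) * r ^ k := by
        intro k
        have hnat : (-V - (k:ℤ)).natAbs = V.natAbs + k := by omega
        have hnatV : (-V : ℤ).natAbs = V.natAbs := Int.natAbs_neg V
        rw [FF, FF, hr, mul_assoc]
        congr 1
        rw [← ENNReal.ofReal_pow hq0, ← ENNReal.ofReal_mul (mul_nonneg (vval_pos _ _ _).le (by positivity))]
        congr 1
        rw [vval, vval, Sx_ext_snoc_top, Sx_ext_snoc_top, hnat, hnatV]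
        exact exp_geom_aux _ _ _ _ _
      have hsupp : Function.support (fun cz : ℤ => iterm lam ⟨m + 2, Fin.snoc u cz⟩)
          ⊆ Set.range (fun k : ℕ => -V - (k : ℤ)) := by
        intro cz hcz
        rw [Function.mem_support] at hcz
        have hle : cz ≤ -V := by
          by_contra h
          exact hcz (by rw [iterm_snoc, if_neg (fun hd => h ((hDchar cz).1 hd))])
        exact ⟨(-V - cz).toNat, by simp; omega⟩
      have hinj : Function.Injective (fun k : ℕ => -V - (k : ℤ)) := by
        intro a b hab
        simp only at hab
        omega
      have hit : itail lam m u = ∑' k : ℕ, iterm lam ⟨m + 2, Fin.snoc u (-V - (k : ℤ))⟩ :=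
        (hinj.tsum_eq hsupp).symm
      have hitv : itail lam m u = FF lam m u (-V) * (1 - r)⁻¹ := by
        rw [hit]
        have he : ∀ k : ℕ, iterm lam ⟨m + 2, Fin.snoc u (-V - (k : ℤ))⟩
            = FF lam m u (-V) * r ^ k := by
          intro k
          rw [iterm_snoc, if_pos ((hDchar _).2 (by omega)), hFF]
        rw [tsum_congr he, ENNReal.tsum_mul_left, ENNReal.tsum_geometric]
      have h1r : (1 : ℝ≥0∞) - r = ENNReal.ofReal (1 - Real.exp (-lam) / 2) := by
        rw [ENNReal.ofReal_sub _ hq0, ENNReal.ofReal_one]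
      have hrne : (1 : ℝ≥0∞) - r ≠ 0 := by
        rw [h1r]
        simp only [ne_eq, ENNReal.ofReal_eq_zero, not_le]
        linarith
      have hrtop : (1 : ℝ≥0∞) - r ≠ ⊤ := ne_top_of_le_ne_top ENNReal.one_ne_top tsub_le_self
      rw [hgt, hitv, ← h1r, mul_comm (FF lam m u (-V)) ((1 - r)⁻¹), ← mul_assoc,
        ENNReal.mul_inv_cancel hrne hrtop, one_mul]


lemma snoc_neg {m : ℕ} (u : Fin (m + 1) → ℤ) (cz : ℤ) :
    (Fin.snoc (-u) (-cz) : Fin (m + 2) → ℤ) = -(Fin.snoc u cz) := by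
  funext i
  refine Fin.lastCases ?_ (fun j => ?_) i
  · simp [Fin.snoc_last]
  · simp [Fin.snoc_castSucc]

lemma wgt_neg (n : ℕ) (u : Fin n → ℤ) : wgt ⟨n, -u⟩ = wgt ⟨n, u⟩ := by
  refine Finset.prod_congr rfl fun i _ => ?_
  simp [pz, Int.natAbs_neg]

lemma vval_neg (lam : ℝ) (n : ℕ) (x : ℕ → ℤ) : vval lam n (-x) = vval lam n x := by
  rw [vval, vval, Sx_neg]

lemma iterm_neg (lam : ℝ) (n : ℕ) (u : Fin n → ℤ) :
    iterm lam ⟨n, -u⟩ = iterm lam ⟨n, u⟩ := by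
  rw [iterm, iterm]
  have he : ext (-u) = -(ext u) := ext_neg u
  by_cases h : Dc n (ext u)
  · rw [if_pos h, if_pos (by rw [he, Dc_neg]; exact h)]
    rw [he, vval_neg]
    exact congrArg _ (wgt_neg n u)
  · rw [if_neg h, if_neg (by rw [he, Dc_neg]; exact h)]

lemma itail_neg (lam : ℝ) (m : ℕ) (u : Fin (m + 1) → ℤ) :
    itail lam m (-u) = itail lam m u := by
  rw [itail, itail, ← (Equiv.neg ℤ).tsum_eq (fun cz => iterm lam ⟨m + 2, Fin.snoc (-u) cz⟩)]
  refine tsum_congr fun cz => ?_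
  show iterm lam ⟨m + 2, Fin.snoc (-u) (-cz)⟩ = _
  rw [snoc_neg, iterm_neg]

lemma itail_zero (lam : ℝ) (m : ℕ) (u : Fin (m + 1) → ℤ) (h0 : ext u 0 = 0) :
    itail lam m u = 0 := by
  refine ENNReal.tsum_eq_zero.2 fun cz => ?_
  rw [iterm_snoc, if_neg]
  intro hDc
  rw [Dc_two] at hDc
  exact hDc.1.1 (by rw [ext_snoc_lt u cz (by omega)]; exact h0)

lemma itail_sum_split (lam : ℝ) (m : ℕ) :
    ∑' u : Fin (m + 1) → ℤ, itail lam m u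
      = 2 * ∑' u : Fin (m + 1) → ℤ, (if 0 < ext u 0 then itail lam m u else 0) := by
  have hpt : ∀ u : Fin (m + 1) → ℤ, itail lam m u
      = (if 0 < ext u 0 then itail lam m u else 0)
        + (if ext u 0 < 0 then itail lam m u else 0) := by
    intro u
    rcases lt_trichotomy (ext u 0) 0 with h | h | h
    · rw [if_neg (by omega), if_pos h, zero_add]
    · rw [if_neg (by omega), if_neg (by omega), itail_zero lam m u h, add_zero]
    · rw [if_pos h, if_neg (by omega), add_zero]
  rw [tsum_congr hpt, ENNReal.tsum_add]
  have hneg : ∑' u : Fin (m + 1) → ℤ, (if ext u 0 < 0 then itail lam m u else 0)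
      = ∑' u : Fin (m + 1) → ℤ, (if 0 < ext u 0 then itail lam m u else 0) := by
    rw [← (Equiv.neg (Fin (m + 1) → ℤ)).tsum_eq
      (fun u => if ext u 0 < 0 then itail lam m u else 0)]
    refine tsum_congr fun u => ?_
    show (if ext (-u) 0 < 0 then itail lam m (-u) else 0) = _
    have h1 : ext (-u) 0 = -(ext u 0) := by rw [ext_neg]; rfl
    rw [h1, itail_neg]
    by_cases h : 0 < ext u 0
    · rw [if_pos (by omega), if_pos h]
    · rw [if_neg (by omega), if_neg h]
  rw [hneg, two_mul]

set_option maxHeartbeats 1000000 in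
lemma tsum_idx (f : Idx → ℝ≥0∞) (h0 : ∀ u : Fin 0 → ℤ, f ⟨0, u⟩ = 0) :
    ∑' a : Idx, f a = (∑' u : Fin 1 → ℤ, f ⟨1, u⟩)
      + ∑' m : ℕ, ∑' u : Fin (m + 1) → ℤ, ∑' cz : ℤ, f ⟨m + 2, Fin.snoc u cz⟩ := by
  rw [ENNReal.tsum_sigma' f, tsum_eq_zero_add' ENNReal.summable]
  have hz : (∑' u : Fin 0 → ℤ, f ⟨0, u⟩) = 0 := by simp [h0]
  rw [hz, zero_add, tsum_eq_zero_add' ENNReal.summable]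
  congr 1
  refine tsum_congr fun m => ?_
  rw [← (Fin.snocEquiv (fun _ : Fin (m + 2) => ℤ)).tsum_eq (fun u => f ⟨m + 2, u⟩),
    ENNReal.tsum_prod', ENNReal.tsum_comm]
  refine tsum_congr fun u => tsum_congr fun cz => ?_
  congr 1

lemma sum_n_one (lam : ℝ) :
    (∑' u : Fin 1 → ℤ, iterm lam ⟨1, u⟩)
      = ENNReal.ofReal (Real.exp (Real.log (3 / 2) - lam) / 3) ∧
    (∑' u : Fin 1 → ℤ, gterm lam ⟨1, u⟩)
      = ENNReal.ofReal (Real.exp (Real.log (3 / 2) - lam) / 3) := by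
  have hext : ∀ i, ext (fun _ : Fin 1 => (0:ℤ)) i = 0 := by
    intro i
    simp [ext]
  have hDc : Dc 1 (ext (fun _ : Fin 1 => (0:ℤ))) := (Dc_one _).2 (hext 0)
  have hV : Vx (ext (fun _ : Fin 1 => (0:ℤ))) 1 = 0 := by rw [Vx_one, hext]
  have hval : ENNReal.ofReal (vval lam 1 (ext (fun _ : Fin 1 => (0:ℤ))))
      * wgt ⟨1, fun _ => (0:ℤ)⟩
      = ENNReal.ofReal (Real.exp (Real.log (3 / 2) - lam) / 3) := by
    have h1 : vval lam 1 (ext (fun _ : Fin 1 => (0:ℤ))) = Real.exp (Real.log (3 / 2) - lam) := by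
      rw [vval]
      have : Sx (ext (fun _ : Fin 1 => (0:ℤ))) 1 = 0 := by
        rw [Sx, Finset.sum_range_one, hext]
        rfl
      rw [this]
      norm_num
    have h2 : wgt ⟨1, fun _ => (0:ℤ)⟩ = ENNReal.ofReal (1 / 3) := by
      show (∏ i : Fin 1, pz 0) = _
      rw [Fin.prod_univ_one, pz]
      norm_num
    rw [h1, h2, ← ENNReal.ofReal_mul (Real.exp_pos _).le]
    norm_num
    rw [mul_one_div]
  have hunique : ∀ u : Fin 1 → ℤ, u ≠ (fun _ => 0) → ¬ Dc 1 (ext u) := by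
    intro u hu hDcu
    apply hu
    funext i
    have h0 := (Dc_one _).1 hDcu
    have : ext u 0 = u i := by
      simp [ext]
      congr 1
      exact Subsingleton.elim _ _
    rw [← this, h0]
  constructor
  · rw [tsum_eq_single (fun _ => (0:ℤ)) ?_]
    · rw [iterm, if_pos hDc]
      exact hval
    · intro u hu
      rw [iterm, if_neg (hunique u hu)]
  · rw [tsum_eq_single (fun _ => (0:ℤ)) ?_]
    · rw [gterm, if_pos ⟨hDc, le_of_eq hV.symm, hV⟩]
      exact hval
    · intro u hu
      rw [gterm, if_neg (fun h => hunique u hu h.1)]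

def posSum (lam : ℝ) (m : ℕ) : ℝ≥0∞ :=
  ∑' u : Fin (m + 1) → ℤ, (if 0 < ext u 0 then itail lam m u else 0)

def Ptot (lam : ℝ) : ℝ≥0∞ := ∑' m : ℕ, posSum lam m

lemma sum_gterm (lam : ℝ) (hlam : 0 < lam) :
    ∑' a : Idx, gterm lam a
      = ENNReal.ofReal (Real.exp (Real.log (3 / 2) - lam) / 3)
        + ENNReal.ofReal (1 - Real.exp (-lam) / 2) * Ptot lam := by
  rw [tsum_idx _ (fun u => by rw [gterm, if_neg (fun h => Dc_zero _ h.1)])]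
  rw [(sum_n_one lam).2]
  congr 1
  rw [Ptot, ← ENNReal.tsum_mul_left]
  refine tsum_congr fun m => ?_
  rw [posSum, ← ENNReal.tsum_mul_left]
  refine tsum_congr fun u => ?_
  exact core lam hlam m u

lemma sum_iterm (lam : ℝ) :
    ∑' a : Idx, iterm lam a
      = ENNReal.ofReal (Real.exp (Real.log (3 / 2) - lam) / 3) + 2 * Ptot lam := by
  rw [tsum_idx _ (fun u => by rw [iterm, if_neg (Dc_zero _)])]
  rw [(sum_n_one lam).1]
  congr 1
  rw [Ptot, ← ENNReal.tsum_mul_left]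
  exact tsum_congr fun m => itail_sum_split lam m


def c1fun (lam : ℝ) : ℕ → (ℕ → ℤ) → ℝ≥0∞ := fun n x =>
  if 0 ≤ Vx x 1 ∧ Vx x n = 0 then ENNReal.ofReal (vval lam n x) else 0
def c2fun (lam : ℝ) : ℕ → (ℕ → ℤ) → ℝ≥0∞ := fun n x => ENNReal.ofReal (vval lam n x)

lemma c1_local (lam : ℝ) : ∀ n x y, 1 ≤ n → (∀ i < n, x i = y i) →
    c1fun lam n x = c1fun lam n y := by
  intro n x y hn h
  have h1 : Vx x 1 = Vx y 1 := Vx_congr hn h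
  have h2 : Vx x n = Vx y n := Vx_congr le_rfl h
  have h3 : Sx x n = Sx y n := Sx_congr le_rfl h
  simp only [c1fun, vval, h1, h2, h3]

lemma c2_local (lam : ℝ) : ∀ n x y, 1 ≤ n → (∀ i < n, x i = y i) →
    c2fun lam n x = c2fun lam n y := by
  intro n x y hn h
  have h3 : Sx x n = Sx y n := Sx_congr le_rfl h
  simp only [c2fun, vval, h3]

lemma GG_eq (hU : IsLaplaceIID μ U)
    (hfin : ∀ᵐ ω ∂μ, Vwalk U 1 ω = 0 ∨
      ∃ i : ℕ, 2 ≤ i ∧ Vwalk U (i - 1) ω * Vwalk U i ω ≤ 0) (lam : ℝ) :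
    GG μ U lam = ∑' a : Idx, gterm lam a := by
  have h := lintegral_tau_eq_tsum hU hfin (c1fun lam) (c1_local lam)
  rw [GG]
  have hpt : ∀ ω, ENNReal.ofReal
      (if 0 ≤ Vwalk U 1 ω ∧ Vwalk U (tauCross U ω) ω = 0 then
        Real.exp ((Real.log (3 / 2) - lam) * (tauCross U ω) -
          lam * (absSum U (tauCross U ω) ω))
      else 0) = c1fun lam (tauCross U ω) (fun i => U i ω) := by
    intro ω
    by_cases hc : 0 ≤ Vwalk U 1 ω ∧ Vwalk U (tauCross U ω) ω = 0
    · rw [if_pos hc]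
      have hc' : 0 ≤ Vx (fun i => U i ω) 1 ∧ Vx (fun i => U i ω) (tauCross U ω) = 0 := hc
      show _ = (if 0 ≤ Vx (fun i => U i ω) 1 ∧ Vx (fun i => U i ω) (tauCross U ω) = 0 then
        ENNReal.ofReal (vval lam (tauCross U ω) (fun i => U i ω)) else 0)
      rw [if_pos hc']
      rfl
    · rw [if_neg hc]
      have hc' : ¬(0 ≤ Vx (fun i => U i ω) 1 ∧ Vx (fun i => U i ω) (tauCross U ω) = 0) := hc
      show _ = (if 0 ≤ Vx (fun i => U i ω) 1 ∧ Vx (fun i => U i ω) (tauCross U ω) = 0 then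
        ENNReal.ofReal (vval lam (tauCross U ω) (fun i => U i ω)) else 0)
      rw [if_neg hc', ENNReal.ofReal_zero]
  rw [lintegral_congr hpt, h]
  refine tsum_congr fun a => ?_
  by_cases hd : Dc a.1 (ext a.2)
  · rw [if_pos hd]
    show (if 0 ≤ Vx (ext a.2) 1 ∧ Vx (ext a.2) a.1 = 0 then
      ENNReal.ofReal (vval lam a.1 (ext a.2)) else 0) * wgt a = _
    by_cases hC : 0 ≤ Vx (ext a.2) 1 ∧ Vx (ext a.2) a.1 = 0
    · rw [if_pos hC, gterm, if_pos ⟨hd, hC⟩]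
    · rw [if_neg hC, zero_mul, gterm, if_neg (fun hh => hC hh.2)]
  · rw [if_neg hd, gterm, if_neg (fun hh => hd hh.1)]

lemma I_eq (hU : IsLaplaceIID μ U)
    (hfin : ∀ᵐ ω ∂μ, Vwalk U 1 ω = 0 ∨
      ∃ i : ℕ, 2 ≤ i ∧ Vwalk U (i - 1) ω * Vwalk U i ω ≤ 0) (lam : ℝ) :
    (∫⁻ ω, ENNReal.ofReal
        (Real.exp ((Real.log (3 / 2) - lam) * (tauCross U ω) -
          lam * (absSum U (tauCross U ω) ω))) ∂μ) = ∑' a : Idx, iterm lam a := by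
  have h := lintegral_tau_eq_tsum hU hfin (c2fun lam) (c2_local lam)
  rw [show (fun ω => ENNReal.ofReal
      (Real.exp ((Real.log (3 / 2) - lam) * (tauCross U ω) -
        lam * (absSum U (tauCross U ω) ω))))
      = fun ω => c2fun lam (tauCross U ω) (fun i => U i ω) from rfl, h]
  rfl

end
end GDecompAux

/-- **Decomposition of `G(λ)`:** for every `λ > 0`, with `α = log(3/2) − λ`,
`G(λ) = (e^α/3)(1/2 + e^{−λ}/4) + (1/2)(1 − e^{−λ}/2)·E[e^{ατ − λ(|U_1|+⋯+|U_τ|)}]`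
as elements of `[0,∞]`. -/
theorem G_decomposition {Ω : Type*} [MeasurableSpace Ω] (μ : Measure Ω)
    [IsProbabilityMeasure μ] (U : ℕ → Ω → ℤ) (hU : IsLaplaceIID μ U)
    (hfin : ∀ᵐ ω ∂μ, Vwalk U 1 ω = 0 ∨
      ∃ i : ℕ, 2 ≤ i ∧ Vwalk U (i - 1) ω * Vwalk U i ω ≤ 0)
    (lam : ℝ) (hlam : 0 < lam) :
    GG μ U lam =
      ENNReal.ofReal ((Real.exp (Real.log (3 / 2) - lam) / 3) *
          (1 / 2 + Real.exp (-lam) / 4)) +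
        ENNReal.ofReal ((1 / 2) * (1 - Real.exp (-lam) / 2)) *
          ∫⁻ ω, ENNReal.ofReal
            (Real.exp ((Real.log (3 / 2) - lam) * (tauCross U ω) -
              lam * (absSum U (tauCross U ω) ω))) ∂μ := by
  classical
  have hGG := GDecompAux.GG_eq hU hfin lam
  have hI := GDecompAux.I_eq hU hfin lam
  rw [hGG, hI, GDecompAux.sum_gterm lam hlam, GDecompAux.sum_iterm lam]
  set X := GDecompAux.Ptot lam with hX
  set e := Real.exp (Real.log (3 / 2) - lam) with he
  set E := Real.exp (-lam) with hE
  have hE1 : E < 1 := Real.exp_lt_one_iff.2 (neg_lt_zero.2 hlam)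
  have hE0 : 0 < E := Real.exp_pos _
  have he0 : 0 < e := Real.exp_pos _
  have hE2 : (0:ℝ) ≤ 1 - E / 2 := by linarith
  have h2 : ENNReal.ofReal (1 / 2 * (1 - E / 2)) * 2 = ENNReal.ofReal (1 - E / 2) := by
    rw [show ((2:ℝ≥0∞)) = ENNReal.ofReal (2:ℝ) by norm_num,
      ← ENNReal.ofReal_mul (mul_nonneg (by norm_num) hE2)]
    congr 1
    ring
  have h3 : ENNReal.ofReal (e / 3 * (1 / 2 + E / 4))
      + ENNReal.ofReal (1 / 2 * (1 - E / 2) * (e / 3)) = ENNReal.ofReal (e / 3) := by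
    rw [← ENNReal.ofReal_add (by positivity) (mul_nonneg (mul_nonneg (by norm_num) hE2)
      (by positivity))]
    congr 1
    ring
  calc ENNReal.ofReal (e / 3) + ENNReal.ofReal (1 - E / 2) * X
      = (ENNReal.ofReal (e / 3 * (1 / 2 + E / 4))
          + ENNReal.ofReal (1 / 2 * (1 - E / 2) * (e / 3)))
        + ENNReal.ofReal (1 - E / 2) * X := by rw [h3]
    _ = ENNReal.ofReal (e / 3 * (1 / 2 + E / 4))
        + (ENNReal.ofReal (1 / 2 * (1 - E / 2)) * ENNReal.ofReal (e / 3)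
          + ENNReal.ofReal (1 / 2 * (1 - E / 2)) * (2 * X)) := by
        rw [← ENNReal.ofReal_mul (mul_nonneg (by norm_num) hE2), ← mul_assoc, h2, add_assoc]
    _ = ENNReal.ofReal (e / 3 * (1 / 2 + E / 4))
        + ENNReal.ofReal (1 / 2 * (1 - E / 2)) * (ENNReal.ofReal (e / 3) + 2 * X) := by
        ring
end

section
/- Let λ* > 0 satisfy Σ_{t=1}^∞ 2^{−t}|I_t| e^{−λ* t} = 1, and set K*(t) = 2^{−t}|I_t| e^{−λ* t}, which defines a probability measure on ℕ. Then K* has exponential tail: there exist constants c_1, c_2 > 0 such that K*(n) ≤ c_1 e^{−c_2 n} for every n ∈ ℕ. -/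
/-- The set `I_t` of horizontal excursions of length `t`: self-avoiding `t`-step paths in
`ℤ²` starting `(0,0) → (1,0)`, with steps east, north or south, staying in the upper
half-plane and ending on the `x`-axis. -/
def excSet (t : ℕ) : Set (Fin (t + 1) → ℤ × ℤ) :=
  {π | π 0 = (0, 0) ∧ (∀ _h : 0 < t, π ⟨1, by omega⟩ = (1, 0)) ∧
    (∀ i : Fin t,
      π i.succ - π i.castSucc = (1, 0) ∨ π i.succ - π i.castSucc = (0, 1) ∨
        π i.succ - π i.castSucc = (0, -1)) ∧
    Function.Injective π ∧
    (∀ i : Fin (t + 1), 0 ≤ (π i).2) ∧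
    (π (Fin.last t)).2 = 0}


/-- Step moves: 0 = east, 1 = north, 2 = south. -/
def mv (s : Fin 3) : ℤ × ℤ := if s = 0 then (1, 0) else if s = 1 then (0, 1) else (0, -1)

/-- Non-reversal compatibility of consecutive steps. -/
def ok (a b : Fin 3) : Prop := ¬(a = 1 ∧ b = 2) ∧ ¬(a = 2 ∧ b = 1)

instance : DecidablePred (fun p : Fin 3 × Fin 3 => ok p.1 p.2) := fun _ => by
  unfold ok; infer_instance

instance (a b : Fin 3) : Decidable (ok a b) := by unfold ok; infer_instance

/-- Allowed next steps after a given step. -/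
def A (f : Fin 3) : Finset (Fin 3) := if f = 1 then {0, 1} else if f = 2 then {0, 2} else {0, 1, 2}

/-- New height after step `f` from height `h`, with ceiling 5; `none` if the move is
not allowed. -/
def nh (f : Fin 3) (h : ℕ) : Option ℕ :=
  if f = 1 then (if h + 1 ≤ 5 then some (h + 1) else none)
  else if f = 2 then (if h = 0 then none else some (h - 1)) else some h

/-- Finset of words of length `n` starting with symbol `f`, read as a height path
starting at height `h`, staying in `[0,5]`, ending at height `0`, with no immediate
reversals. -/
def W : ℕ → ℕ → Fin 3 → Finset (List (Fin 3))
  | 0, _, _ => ∅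
  | 1, h, f => if (f = 0 ∧ h = 0) ∨ (f = 2 ∧ h = 1) then {[f]} else ∅
  | (n+2), h, f =>
    match nh f h with
    | none => ∅
    | some h' => ((A f).biUnion fun f' => W (n+1) h' f').image (f :: ·)

lemma W_head {n h f w} (hw : w ∈ W n h f) : ∃ r, w = f :: r := by
  match n with
  | 0 => simp [W] at hw
  | 1 =>
    simp only [W] at hw
    split at hw
    · simp at hw; exact ⟨[], hw⟩
    · simp at hw
  | (n+2) =>
    simp only [W] at hw
    split at hw
    · simp at hw
    · simp only [Finset.mem_image] at hw
      obtain ⟨r, _, rfl⟩ := hw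
      exact ⟨r, rfl⟩

lemma W_disj {m h'} {f₁ f₂ : Fin 3} (hne : f₁ ≠ f₂) : Disjoint (W m h' f₁) (W m h' f₂) := by
  rw [Finset.disjoint_left]
  intro w h1 h2
  obtain ⟨r₁, rfl⟩ := W_head h1
  obtain ⟨r₂, he⟩ := W_head h2
  exact hne (by injection he)

lemma cardW {n h f h'} (hnh : nh f h = some h') :
    (W (n+2) h f).card = ∑ f' ∈ A f, (W (n+1) h' f').card := by
  show (match nh f h with
    | none => (∅ : Finset (List (Fin 3)))
    | some h' => ((A f).biUnion fun f' => W (n+1) h' f').image (f :: ·)).card = _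
  rw [hnh]
  rw [Finset.card_image_of_injective _ (List.cons_injective)]
  exact Finset.card_biUnion (fun a _ b _ hab => W_disj hab)

lemma cW0 (n h : ℕ) : (W (n+2) h 0).card =
    (W (n+1) h 0).card + (W (n+1) h 1).card + (W (n+1) h 2).card := by
  rw [cardW (show nh 0 h = some h by simp [nh])]
  show ∑ f' ∈ ({0,1,2} : Finset (Fin 3)), _ = _
  rw [Finset.sum_insert (by decide), Finset.sum_insert (by decide), Finset.sum_singleton]
  ring

lemma cW1 (n h : ℕ) (hh : h + 1 ≤ 5) : (W (n+2) h 1).card =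
    (W (n+1) (h+1) 0).card + (W (n+1) (h+1) 1).card := by
  rw [cardW (show nh 1 h = some (h+1) by simp [nh, hh])]
  show ∑ f' ∈ ({0,1} : Finset (Fin 3)), _ = _
  rw [Finset.sum_insert (by decide), Finset.sum_singleton]

lemma cW1' (n : ℕ) : (W (n+2) 5 1).card = 0 := by
  show (match nh 1 5 with
    | none => (∅ : Finset (List (Fin 3)))
    | some h' => ((A 1).biUnion fun f' => W (n+1) h' f').image (1 :: ·)).card = _
  rw [show nh 1 5 = none by simp [nh]]
  simp

lemma cW2 (n h : ℕ) : (W (n+2) (h+1) 2).card =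
    (W (n+1) h 0).card + (W (n+1) h 2).card := by
  rw [cardW (show nh 2 (h+1) = some h by simp [nh])]
  show ∑ f' ∈ ({0,2} : Finset (Fin 3)), _ = _
  rw [Finset.sum_insert (by decide), Finset.sum_singleton]

lemma cW2' (n : ℕ) : (W (n+2) 0 2).card = 0 := by
  show (match nh 2 0 with
    | none => (∅ : Finset (List (Fin 3)))
    | some h' => ((A 2).biUnion fun f' => W (n+1) h' f').image (2 :: ·)).card = _
  rw [show nh 2 0 = none by simp [nh]]
  simp
/-- Partial-sum path of a word. -/
def pf (w : List (Fin 3)) (i : ℕ) : ℤ × ℤ := ∑ k ∈ Finset.range i, mv (w.getD k 0)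

lemma pf_zero (w) : pf w 0 = (0, 0) := by simp [pf, Prod.ext_iff]

lemma pf_succ (w i) : pf w (i+1) = pf w i + mv (w.getD i 0) := by
  simp [pf, Finset.sum_range_succ]

lemma pf_cons (f : Fin 3) (r : List (Fin 3)) (i : ℕ) :
    pf (f :: r) (i+1) = mv f + pf r i := by
  unfold pf
  rw [Finset.sum_range_succ']
  simp [add_comm]

lemma okA : ∀ f f' : Fin 3, f' ∈ A f → ok f f' := by decide

lemma W_sound : ∀ n h (f : Fin 3) w, w ∈ W n h f → h ≤ 5 →
    w.length = n ∧ List.Chain' ok w ∧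
    (∀ i ≤ n, 0 ≤ (h : ℤ) + (pf w i).2 ∧ (h : ℤ) + (pf w i).2 ≤ 5) ∧
    (h : ℤ) + (pf w n).2 = 0 := by
  intro n
  induction n using Nat.strong_induction_on with
  | _ n IH =>
    match n with
    | 0 => intro h f w hw _; simp [W] at hw
    | 1 =>
      intro h f w hw hh
      simp only [W] at hw
      split at hw
      case isTrue hc =>
        simp only [Finset.mem_singleton] at hw
        subst hw
        rcases hc with ⟨rfl, rfl⟩ | ⟨rfl, rfl⟩ <;>
        · refine ⟨rfl, by simp [List.Chain'], ?_, ?_⟩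
          · intro i hi
            interval_cases i <;> simp [pf_zero, pf_succ, mv]
          · simp [pf_zero, pf_succ, mv]
      case isFalse => simp at hw
    | (n+2) =>
      intro h f w hw hh
      simp only [W] at hw
      split at hw
      case _ => simp at hw
      case _ h' hnh =>
        simp only [Finset.mem_image, Finset.mem_biUnion] at hw
        obtain ⟨r, ⟨f', hf', hr⟩, rfl⟩ := hw
        -- facts about h'
        have hstep : ((h' : ℤ) = (h : ℤ) + (mv f).2) ∧ h' ≤ 5 := by
          unfold nh at hnh
          split at hnh
          · split at hnh
            · subst f; injection hnh with e; subst e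
              constructor
              · push_cast; simp [mv]
              · omega
            · exact absurd hnh (by simp)
          · split at hnh
            · split at hnh
              · exact absurd hnh (by simp)
              · rename_i hf2 _; subst f; injection hnh with e; subst e
                constructor
                · push_cast [mv]; omega
                · omega
            · rename_i hf1 hf2
              injection hnh with e; subst e
              have : f = 0 := by omega
              subst this
              exact ⟨by simp [mv], hh⟩
        obtain ⟨hstep, hh'⟩ := hstep
        obtain ⟨hlen, hchain, hht, hend⟩ := IH (n+1) (by omega) h' f' r hr hh'
        obtain ⟨r', rfl⟩ := W_head hr
        refine ⟨by simp [hlen], ?_, ?_, ?_⟩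
        · exact List.isChain_cons_cons.mpr ⟨okA f f' hf', hchain⟩
        · intro i hi
          match i with
          | 0 => simp [pf_zero]; omega
          | (i+1) =>
            rw [pf_cons]
            have := hht i (by omega)
            simp only [Prod.snd_add]
            constructor <;> omega
        · rw [pf_cons]
          simp only [Prod.snd_add]
          omega

/-- Finset of all words of length `n` with no immediate reversal, starting with `f`. -/
def V : ℕ → Fin 3 → Finset (List (Fin 3))
  | 0, _ => ∅
  | 1, f => {[f]}
  | (n+2), f => ((A f).biUnion fun f' => V (n+1) f').image (f :: ·)

lemma V_head {n f w} (hw : w ∈ V n f) : ∃ r, w = f :: r := by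
  match n with
  | 0 => simp [V] at hw
  | 1 => simp [V] at hw; exact ⟨[], hw⟩
  | (n+2) =>
    simp only [V, Finset.mem_image] at hw
    obtain ⟨r, _, rfl⟩ := hw
    exact ⟨r, rfl⟩

lemma V_disj {m} {f₁ f₂ : Fin 3} (hne : f₁ ≠ f₂) : Disjoint (V m f₁) (V m f₂) := by
  rw [Finset.disjoint_left]
  intro w h1 h2
  obtain ⟨r₁, rfl⟩ := V_head h1
  obtain ⟨r₂, he⟩ := V_head h2
  exact hne (by injection he)

lemma cardV (n : ℕ) (f : Fin 3) :
    (V (n+2) f).card = ∑ f' ∈ A f, (V (n+1) f').card := by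
  show (((A f).biUnion fun f' => V (n+1) f').image (f :: ·)).card = _
  rw [Finset.card_image_of_injective _ (List.cons_injective)]
  exact Finset.card_biUnion (fun a _ b _ hab => V_disj hab)

lemma okA' : ∀ f f' : Fin 3, ok f f' → f' ∈ A f := by decide

/-- Completeness: every non-reversing word lies in `V`. -/
lemma V_complete : ∀ (r : List (Fin 3)) (f : Fin 3), List.Chain' ok (f :: r) →
    (f :: r) ∈ V (f :: r).length f := by
  intro r
  induction r with
  | nil => intro f _; simp [V]
  | cons f' r' IH =>
    intro f hch
    simp only [List.Chain', List.isChain_cons_cons] at hch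
    have hmem := IH f' hch.2
    show _ ∈ V (r'.length + 2) f
    simp only [V, Finset.mem_image]
    refine ⟨f' :: r', Finset.mem_biUnion.mpr ⟨f', okA' f f' hch.1, ?_⟩, rfl⟩
    simpa using hmem

/-- Total count of non-reversing words of length `n`. -/
def sv (n : ℕ) : ℕ := (V n 0).card + (V n 1).card + (V n 2).card

lemma sumA0 (g : Fin 3 → ℕ) : ∑ f' ∈ A 0, g f' = g 0 + g 1 + g 2 := by
  show ∑ f' ∈ ({0,1,2} : Finset (Fin 3)), _ = _
  rw [Finset.sum_insert (by decide), Finset.sum_insert (by decide), Finset.sum_singleton]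
  ring

lemma sumA1 (g : Fin 3 → ℕ) : ∑ f' ∈ A 1, g f' = g 0 + g 1 := by
  show ∑ f' ∈ ({0,1} : Finset (Fin 3)), _ = _
  rw [Finset.sum_insert (by decide), Finset.sum_singleton]

lemma sumA2 (g : Fin 3 → ℕ) : ∑ f' ∈ A 2, g f' = g 0 + g 2 := by
  show ∑ f' ∈ ({0,2} : Finset (Fin 3)), _ = _
  rw [Finset.sum_insert (by decide), Finset.sum_singleton]

lemma sv_rec (n : ℕ) : sv (n+3) = 2 * sv (n+2) + sv (n+1) := by
  have e0 := cardV (n+1) 0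
  have e1 := cardV (n+1) 1
  have e2 := cardV (n+1) 2
  rw [sumA0] at e0; rw [sumA1] at e1; rw [sumA2] at e2
  have e0' := cardV n 0
  rw [sumA0] at e0'
  unfold sv
  rw [e0, e1, e2, e0']
  ring

lemma sv1 : sv 1 = 3 := by decide
lemma sv2 : sv 2 = 7 := by decide

lemma sv_bound : ∀ n : ℕ, (sv (n+1) : ℝ) ≤ 2 * (483/200)^(n+1) ∧
    (sv (n+2) : ℝ) ≤ 2 * (483/200)^(n+2) := by
  intro n
  induction n with
  | zero => rw [sv1, sv2]; norm_num
  | succ m IH =>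
    refine ⟨IH.2, ?_⟩
    rw [sv_rec]
    push_cast
    have h1 := IH.1
    have h2 := IH.2
    rw [show m+1+2 = (m+1)+1+1 by ring, pow_succ, pow_succ]
    rw [show m+2 = (m+1)+1 by ring, pow_succ] at h2
    have hp : (0:ℝ) < (483/200)^(m+1) := by positivity
    nlinarith [h1, h2, hp]

-- decidable facts about mv
lemma mv_options : ∀ s : Fin 3, mv s = (1,0) ∨ mv s = (0,1) ∨ mv s = (0,-1) := by decide
lemma mv_inj : Function.Injective mv := by decide
lemma mv_x_nonneg : ∀ s : Fin 3, 0 ≤ (mv s).1 := by decide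
lemma vert_eq : ∀ s s' : Fin 3, (mv s).1 = 0 → (mv s').1 = 0 → ok s s' → s = s' := by decide
lemma vert_y : ∀ s : Fin 3, (mv s).1 = 0 → (mv s).2 = 1 ∨ (mv s).2 = -1 := by decide
lemma not_ok : ∀ a b : Fin 3, ¬ ok a b → (a = 1 ∧ b = 2) ∨ (a = 2 ∧ b = 1) := by decide

def inv (d : ℤ × ℤ) : Fin 3 := if d = (0,1) then 1 else if d = (0,-1) then 2 else 0

lemma mv_inv : ∀ d : ℤ × ℤ, d = (1,0) ∨ d = (0,1) ∨ d = (0,-1) → mv (inv d) = d := by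
  rintro d (rfl | rfl | rfl) <;> decide

lemma chain_getD {w : List (Fin 3)} (hch : List.Chain' ok w) {k : ℕ}
    (hk : k + 1 < w.length) : ok (w.getD k 0) (w.getD (k+1) 0) := by
  rw [List.getD_eq_getElem _ _ (show k < w.length by omega), List.getD_eq_getElem _ _ hk]
  exact List.isChain_iff_getElem.mp hch k (by omega)

lemma pf_inj_aux (w : List (Fin 3)) (hch : List.Chain' ok w) {a b : ℕ} (hab : a ≤ b)
    (hb : b ≤ w.length) (heq : pf w a = pf w b) : a = b := by
  rcases eq_or_lt_of_le hab with rfl | hlt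
  · rfl
  exfalso
  have hsub : ∑ k ∈ Finset.Ico a b, mv (w.getD k 0) = 0 := by
    rw [Finset.sum_Ico_eq_sub _ hab]
    unfold pf at heq
    rw [← heq]
    simp
  have hx : ∀ k ∈ Finset.Ico a b, (mv (w.getD k 0)).1 = 0 := by
    have h1 : ∑ k ∈ Finset.Ico a b, (mv (w.getD k 0)).1 = 0 := by
      have := congrArg Prod.fst hsub
      simpa [Prod.fst_sum] using this
    intro k hk
    exact (Finset.sum_eq_zero_iff_of_nonneg (fun k _ => mv_x_nonneg _)).mp h1 k hk
  have hconst : ∀ k, a ≤ k → k < b → w.getD k 0 = w.getD a 0 := by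
    intro k hak
    induction k, hak using Nat.le_induction with
    | base => intro _; rfl
    | succ k hak IH =>
      intro hkb
      have hkb' : k < b := by omega
      have h1 : (mv (w.getD k 0)).1 = 0 := hx k (Finset.mem_Ico.mpr ⟨hak, hkb'⟩)
      have h2 : (mv (w.getD (k+1) 0)).1 = 0 := hx (k+1) (Finset.mem_Ico.mpr ⟨by omega, hkb⟩)
      have hok : ok (w.getD k 0) (w.getD (k+1) 0) := chain_getD hch (by omega)
      have he : w.getD k 0 = w.getD (k+1) 0 := vert_eq _ _ h1 h2 hok
      rw [← he]
      exact IH hkb'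
  have hmem : a ∈ Finset.Ico a b := Finset.mem_Ico.mpr ⟨le_refl a, hlt⟩
  have hy : ∑ k ∈ Finset.Ico a b, (mv (w.getD k 0)).2 = 0 := by
    have := congrArg Prod.snd hsub
    simpa [Prod.snd_sum] using this
  have hcst : ∑ k ∈ Finset.Ico a b, (mv (w.getD k 0)).2
      = ((b - a : ℕ) : ℤ) * (mv (w.getD a 0)).2 := by
    rw [Finset.sum_congr rfl (fun k hk => by
      rw [hconst k (Finset.mem_Ico.mp hk).1 (Finset.mem_Ico.mp hk).2])]
    rw [Finset.sum_const, Nat.card_Ico, nsmul_eq_mul]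
  rw [hcst] at hy
  have hba : ((b - a : ℕ) : ℤ) ≠ 0 := by
    simp only [ne_eq, Nat.cast_eq_zero]
    omega
  rcases vert_y _ (hx a hmem) with h | h <;> rw [h] at hy <;> omega

/-! ### From `W` words to excursions (lower bound) -/

lemma pf_getD_lt {w : List (Fin 3)} {k : ℕ} : pf w (k+1) - pf w k = mv (w.getD k 0) := by
  rw [pf_succ]; ring

lemma W_excMem {m : ℕ} {w : List (Fin 3)} (hw : w ∈ W (m+1) 0 0) :
    (fun i : Fin (m+2) => pf w i.val) ∈ excSet (m+1) := by
  obtain ⟨hlen, hchain, hht, hend⟩ := W_sound (m+1) 0 0 w hw (by norm_num)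
  simp only [Nat.cast_zero, zero_add] at hht hend
  obtain ⟨r, rfl⟩ := W_head hw
  refine ⟨?_, ?_, ?_, ?_, ?_, ?_⟩
  · show pf _ ((0 : Fin (m+2)) : ℕ) = (0, 0)
    rw [Fin.val_zero, pf_zero]
  · intro _
    show pf _ 1 = (1, 0)
    rw [pf_succ, pf_zero]
    simp [mv]
  · intro i
    simp only [Fin.val_succ, Fin.coe_castSucc]
    rw [pf_getD_lt]
    exact mv_options _
  · intro i j he
    simp only at he
    rcases le_total i.val j.val with hle | hle
    · exact Fin.ext (pf_inj_aux _ hchain hle (by rw [hlen]; omega) he)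
    · exact Fin.ext (pf_inj_aux _ hchain hle (by rw [hlen]; omega) he.symm).symm
  · intro i
    exact (hht i.val (by omega)).1
  · show (pf _ ((Fin.last (m+1)) : ℕ)).2 = 0
    rw [Fin.val_last]
    exact hend

lemma lower_card (m : ℕ) [Finite ↥(excSet (m+1))] :
    (W (m+1) 0 0).card ≤ Nat.card ↥(excSet (m+1)) := by
  rw [← Nat.card_eq_finsetCard]
  refine Nat.card_le_card_of_injective
    (fun p => ⟨fun i : Fin (m+2) => pf p.val i.val, W_excMem p.prop⟩) ?_
  rintro ⟨w, hw⟩ ⟨w', hw'⟩ he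
  simp only [Subtype.mk.injEq] at he ⊢
  have hlen : w.length = m+1 := (W_sound (m+1) 0 0 w hw (by norm_num)).1
  have hlen' : w'.length = m+1 := (W_sound (m+1) 0 0 w' hw' (by norm_num)).1
  have hgd : ∀ k, k < m+1 → w.getD k 0 = w'.getD k 0 := by
    intro k hk
    apply mv_inj
    rw [← pf_getD_lt, ← pf_getD_lt]
    have h1 := congrFun he ⟨k+1, by omega⟩
    have h2 := congrFun he ⟨k, by omega⟩
    simp only at h1 h2
    rw [h1, h2]
  apply List.ext_getElem (by omega)
  intro k h1 h2
  have := hgd k (by omega)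
  rwa [List.getD_eq_getElem _ _ h1, List.getD_eq_getElem _ _ h2] at this

/-! ### From excursions to `V` words (upper bound & finiteness) -/

def wordOf {t : ℕ} (π : Fin (t+1) → ℤ × ℤ) : List (Fin 3) :=
  List.ofFn (fun i : Fin t => inv (π i.succ - π i.castSucc))

lemma wordOf_length {t} (π : Fin (t+1) → ℤ × ℤ) : (wordOf π).length = t := by
  simp [wordOf]

lemma wordOf_getD {t} (π : Fin (t+1) → ℤ × ℤ) {k : ℕ} (hk : k < t) :
    (wordOf π).getD k 0 = inv (π (Fin.succ ⟨k, hk⟩) - π (Fin.castSucc ⟨k, hk⟩)) := by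
  rw [List.getD_eq_getElem _ _ (by simpa [wordOf] using hk)]
  simp only [wordOf, List.getElem_ofFn]

lemma exc_step {m : ℕ} {π : Fin (m+2) → ℤ × ℤ} (hπ : π ∈ excSet (m+1)) {k : ℕ}
    (hk : k < m+1) :
    π (Fin.succ ⟨k, hk⟩) - π (Fin.castSucc ⟨k, hk⟩) = mv ((wordOf π).getD k 0) := by
  rw [wordOf_getD _ hk, mv_inv _ (hπ.2.2.1 ⟨k, hk⟩)]

lemma inv_eq1 : ∀ d : ℤ × ℤ, (d = (1,0) ∨ d = (0,1) ∨ d = (0,-1)) → inv d = 1 →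
    d = (0,1) := by rintro d (rfl | rfl | rfl) <;> decide
lemma inv_eq2 : ∀ d : ℤ × ℤ, (d = (1,0) ∨ d = (0,1) ∨ d = (0,-1)) → inv d = 2 →
    d = (0,-1) := by rintro d (rfl | rfl | rfl) <;> decide

lemma exc_chain {m : ℕ} {π : Fin (m+2) → ℤ × ℤ} (hπ : π ∈ excSet (m+1)) :
    List.Chain' ok (wordOf π) := by
  show List.IsChain _ _
  rw [List.isChain_iff_getElem]
  intro i hi
  rw [wordOf_length] at hi
  by_contra hno
  -- identify the two getD values
  have hk1 : i < m + 1 := by omega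
  have hk2 : i + 1 < m + 1 := by omega
  rw [← List.getD_eq_getElem _ 0,
    ← List.getD_eq_getElem _ 0] at hno
  have e1 := exc_step hπ hk1
  have e2 := exc_step hπ hk2
  have d1opt := hπ.2.2.1 ⟨i, hk1⟩
  have d2opt := hπ.2.2.1 ⟨i+1, hk2⟩
  have hcollide : π ⟨i+2, by omega⟩ = π ⟨i, by omega⟩ := by
    have s1 : π ⟨i+1, by omega⟩ - π ⟨i, by omega⟩
        = π (Fin.succ ⟨i, hk1⟩) - π (Fin.castSucc ⟨i, hk1⟩) := rfl
    have s2 : π ⟨i+2, by omega⟩ - π ⟨i+1, by omega⟩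
        = π (Fin.succ ⟨i+1, hk2⟩) - π (Fin.castSucc ⟨i+1, hk2⟩) := rfl
    rcases not_ok _ _ hno with ⟨ha, hb⟩ | ⟨ha, hb⟩
    · have d1 : π (Fin.succ ⟨i, hk1⟩) - π (Fin.castSucc ⟨i, hk1⟩) = (0,1) :=
        inv_eq1 _ d1opt (by rw [← wordOf_getD _ hk1]; exact ha)
      have d2 : π (Fin.succ ⟨i+1, hk2⟩) - π (Fin.castSucc ⟨i+1, hk2⟩) = (0,-1) :=
        inv_eq2 _ d2opt (by rw [← wordOf_getD _ hk2]; exact hb)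
      rw [d1] at s1; rw [d2] at s2
      have := congrArg₂ (· + ·) s2 s1
      simp only [sub_add_sub_cancel] at this
      rw [sub_eq_iff_eq_add] at this
      rw [this]; norm_num
    · have d1 : π (Fin.succ ⟨i, hk1⟩) - π (Fin.castSucc ⟨i, hk1⟩) = (0,-1) :=
        inv_eq2 _ d1opt (by rw [← wordOf_getD _ hk1]; exact ha)
      have d2 : π (Fin.succ ⟨i+1, hk2⟩) - π (Fin.castSucc ⟨i+1, hk2⟩) = (0,1) :=
        inv_eq1 _ d2opt (by rw [← wordOf_getD _ hk2]; exact hb)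
      rw [d1] at s1; rw [d2] at s2
      have := congrArg₂ (· + ·) s2 s1
      simp only [sub_add_sub_cancel] at this
      rw [sub_eq_iff_eq_add] at this
      rw [this]; norm_num
  have := hπ.2.2.2.1 hcollide
  have := congrArg Fin.val this
  simp at this

lemma V_union {m : ℕ} (f : Fin 3) (w : List (Fin 3)) (h : w ∈ V (m+1) f) :
    w ∈ V (m+1) 0 ∪ V (m+1) 1 ∪ V (m+1) 2 := by
  fin_cases f <;> simp only [Finset.mem_union] <;> tauto

lemma exc_word_mem {m : ℕ} {π : Fin (m+2) → ℤ × ℤ} (hπ : π ∈ excSet (m+1)) :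
    wordOf π ∈ V (m+1) 0 ∪ V (m+1) 1 ∪ V (m+1) 2 := by
  have hch := exc_chain hπ
  have : wordOf π = (fun i : Fin (m+1) => inv (π i.succ - π i.castSucc)) 0 ::
      List.ofFn ((fun i : Fin (m+1) => inv (π i.succ - π i.castSucc)) ∘ Fin.succ) := by
    rw [wordOf, List.ofFn_succ]
    rfl
  rw [this] at hch ⊢
  have hc := V_complete _ _ hch
  have hl : ((fun i : Fin (m+1) => inv (π i.succ - π i.castSucc)) 0 ::
      List.ofFn ((fun i : Fin (m+1) => inv (π i.succ - π i.castSucc)) ∘ Fin.succ)).length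
      = m + 1 := by simp
  rw [hl] at hc
  exact V_union _ _ hc

lemma word_determines {m : ℕ} {π π' : Fin (m+2) → ℤ × ℤ} (hπ : π ∈ excSet (m+1))
    (hπ' : π' ∈ excSet (m+1)) (he : wordOf π = wordOf π') : π = π' := by
  have key : ∀ k (hk : k ≤ m+1), π ⟨k, by omega⟩ = π' ⟨k, by omega⟩ := by
    intro k
    induction k with
    | zero =>
      intro _
      have h1 := hπ.1
      have h1' := hπ'.1
      rw [show (⟨0, by omega⟩ : Fin (m+2)) = 0 from rfl]
      rw [h1, h1']
    | succ k IH =>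
      intro hk
      have hk' : k < m + 1 := by omega
      have e1 := exc_step hπ hk'
      have e2 := exc_step hπ' hk'
      rw [he] at e1
      have : π (Fin.succ ⟨k, hk'⟩) - π (Fin.castSucc ⟨k, hk'⟩)
          = π' (Fin.succ ⟨k, hk'⟩) - π' (Fin.castSucc ⟨k, hk'⟩) := by rw [e1, e2]
      have hcs : (Fin.castSucc ⟨k, hk'⟩ : Fin (m+2)) = ⟨k, by omega⟩ := rfl
      have hsc : (Fin.succ ⟨k, hk'⟩ : Fin (m+2)) = ⟨k+1, by omega⟩ := rfl
      rw [hcs, hsc, IH (by omega)] at this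
      exact sub_left_injective this
  funext i
  have := key i.val (by omega)
  simpa using this

instance exc_finite (m : ℕ) : Finite ↥(excSet (m+1)) := by
  refine Finite.of_injective
    (fun p : ↥(excSet (m+1)) =>
      (⟨wordOf p.val, exc_word_mem p.prop⟩ :
        {w // w ∈ V (m+1) 0 ∪ V (m+1) 1 ∪ V (m+1) 2})) ?_
  rintro ⟨π, hπ⟩ ⟨π', hπ'⟩ he
  simp only [Subtype.mk.injEq] at he ⊢
  exact word_determines hπ hπ' he

lemma upper_card (m : ℕ) : Nat.card ↥(excSet (m+1)) ≤ sv (m+1) := by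
  have h1 : Nat.card ↥(excSet (m+1)) ≤
      Nat.card {w // w ∈ V (m+1) 0 ∪ V (m+1) 1 ∪ V (m+1) 2} := by
    refine Nat.card_le_card_of_injective
      (fun p : ↥(excSet (m+1)) => ⟨wordOf p.val, exc_word_mem p.prop⟩) ?_
    rintro ⟨π, hπ⟩ ⟨π', hπ'⟩ he
    simp only [Subtype.mk.injEq] at he ⊢
    exact word_determines hπ hπ' he
  rw [Nat.card_eq_finsetCard] at h1
  calc Nat.card ↥(excSet (m+1)) ≤ (V (m+1) 0 ∪ V (m+1) 1 ∪ V (m+1) 2).card := h1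
    _ ≤ (V (m+1) 0 ∪ V (m+1) 1).card + (V (m+1) 2).card := Finset.card_union_le _ _
    _ ≤ (V (m+1) 0).card + (V (m+1) 1).card + (V (m+1) 2).card :=
        Nat.add_le_add_right (Finset.card_union_le _ _) _
    _ = sv (m+1) := rfl
lemma cW_1_0_0 : (W 1 0 0).card = 1 := by decide

lemma cW_1_0_1 : (W 1 0 1).card = 0 := by decide

lemma cW_1_0_2 : (W 1 0 2).card = 0 := by decide

lemma cW_1_1_0 : (W 1 1 0).card = 0 := by decide

lemma cW_1_1_1 : (W 1 1 1).card = 0 := by decide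

lemma cW_1_1_2 : (W 1 1 2).card = 1 := by decide

lemma cW_1_2_0 : (W 1 2 0).card = 0 := by decide

lemma cW_1_2_1 : (W 1 2 1).card = 0 := by decide

lemma cW_1_2_2 : (W 1 2 2).card = 0 := by decide

lemma cW_1_3_0 : (W 1 3 0).card = 0 := by decide

lemma cW_1_3_1 : (W 1 3 1).card = 0 := by decide

lemma cW_1_3_2 : (W 1 3 2).card = 0 := by decide

lemma cW_1_4_0 : (W 1 4 0).card = 0 := by decide

lemma cW_1_4_1 : (W 1 4 1).card = 0 := by decide

lemma cW_1_4_2 : (W 1 4 2).card = 0 := by decide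

lemma cW_1_5_0 : (W 1 5 0).card = 0 := by decide

lemma cW_1_5_1 : (W 1 5 1).card = 0 := by decide

lemma cW_1_5_2 : (W 1 5 2).card = 0 := by decide

lemma cW_2_0_0 : (W 2 0 0).card = 1 := by
  have := cW0 0 0
  norm_num at this
  rw [this]
  norm_num [cW_1_0_0, cW_1_0_1, cW_1_0_2]

lemma cW_2_0_1 : (W 2 0 1).card = 0 := by
  have := cW1 0 0 (by norm_num)
  norm_num at this
  rw [this]
  norm_num [cW_1_1_0, cW_1_1_1]

lemma cW_2_0_2 : (W 2 0 2).card = 0 := by have := cW2' 0; norm_num at this ⊢; exact this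

lemma cW_2_1_0 : (W 2 1 0).card = 1 := by
  have := cW0 0 1
  norm_num at this
  rw [this]
  norm_num [cW_1_1_0, cW_1_1_1, cW_1_1_2]

lemma cW_2_1_1 : (W 2 1 1).card = 0 := by
  have := cW1 0 1 (by norm_num)
  norm_num at this
  rw [this]
  norm_num [cW_1_2_0, cW_1_2_1]

lemma cW_2_1_2 : (W 2 1 2).card = 1 := by
  have := cW2 0 0
  norm_num at this
  rw [this]
  norm_num [cW_1_0_0, cW_1_0_2]

lemma cW_2_2_0 : (W 2 2 0).card = 0 := by
  have := cW0 0 2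
  norm_num at this
  rw [this]
  norm_num [cW_1_2_0, cW_1_2_1, cW_1_2_2]

lemma cW_2_2_1 : (W 2 2 1).card = 0 := by
  have := cW1 0 2 (by norm_num)
  norm_num at this
  rw [this]
  norm_num [cW_1_3_0, cW_1_3_1]

lemma cW_2_2_2 : (W 2 2 2).card = 1 := by
  have := cW2 0 1
  norm_num at this
  rw [this]
  norm_num [cW_1_1_0, cW_1_1_2]

lemma cW_2_3_0 : (W 2 3 0).card = 0 := by
  have := cW0 0 3
  norm_num at this
  rw [this]
  norm_num [cW_1_3_0, cW_1_3_1, cW_1_3_2]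

lemma cW_2_3_1 : (W 2 3 1).card = 0 := by
  have := cW1 0 3 (by norm_num)
  norm_num at this
  rw [this]
  norm_num [cW_1_4_0, cW_1_4_1]

lemma cW_2_3_2 : (W 2 3 2).card = 0 := by
  have := cW2 0 2
  norm_num at this
  rw [this]
  norm_num [cW_1_2_0, cW_1_2_2]

lemma cW_2_4_0 : (W 2 4 0).card = 0 := by
  have := cW0 0 4
  norm_num at this
  rw [this]
  norm_num [cW_1_4_0, cW_1_4_1, cW_1_4_2]

lemma cW_2_4_1 : (W 2 4 1).card = 0 := by
  have := cW1 0 4 (by norm_num)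
  norm_num at this
  rw [this]
  norm_num [cW_1_5_0, cW_1_5_1]

lemma cW_2_4_2 : (W 2 4 2).card = 0 := by
  have := cW2 0 3
  norm_num at this
  rw [this]
  norm_num [cW_1_3_0, cW_1_3_2]

lemma cW_2_5_0 : (W 2 5 0).card = 0 := by
  have := cW0 0 5
  norm_num at this
  rw [this]
  norm_num [cW_1_5_0, cW_1_5_1, cW_1_5_2]

lemma cW_2_5_1 : (W 2 5 1).card = 0 := by have := cW1' 0; norm_num at this ⊢; exact this

lemma cW_2_5_2 : (W 2 5 2).card = 0 := by
  have := cW2 0 4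
  norm_num at this
  rw [this]
  norm_num [cW_1_4_0, cW_1_4_2]

lemma cW_3_0_0 : (W 3 0 0).card = 1 := by
  have := cW0 1 0
  norm_num at this
  rw [this]
  norm_num [cW_2_0_0, cW_2_0_1, cW_2_0_2]

lemma cW_3_0_1 : (W 3 0 1).card = 1 := by
  have := cW1 1 0 (by norm_num)
  norm_num at this
  rw [this]
  norm_num [cW_2_1_0, cW_2_1_1]

lemma cW_3_0_2 : (W 3 0 2).card = 0 := by have := cW2' 1; norm_num at this ⊢; exact this

lemma cW_3_1_0 : (W 3 1 0).card = 2 := by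
  have := cW0 1 1
  norm_num at this
  rw [this]
  norm_num [cW_2_1_0, cW_2_1_1, cW_2_1_2]

lemma cW_3_1_1 : (W 3 1 1).card = 0 := by
  have := cW1 1 1 (by norm_num)
  norm_num at this
  rw [this]
  norm_num [cW_2_2_0, cW_2_2_1]

lemma cW_3_1_2 : (W 3 1 2).card = 1 := by
  have := cW2 1 0
  norm_num at this
  rw [this]
  norm_num [cW_2_0_0, cW_2_0_2]

lemma cW_3_2_0 : (W 3 2 0).card = 1 := by
  have := cW0 1 2
  norm_num at this
  rw [this]
  norm_num [cW_2_2_0, cW_2_2_1, cW_2_2_2]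

lemma cW_3_2_1 : (W 3 2 1).card = 0 := by
  have := cW1 1 2 (by norm_num)
  norm_num at this
  rw [this]
  norm_num [cW_2_3_0, cW_2_3_1]

lemma cW_3_2_2 : (W 3 2 2).card = 2 := by
  have := cW2 1 1
  norm_num at this
  rw [this]
  norm_num [cW_2_1_0, cW_2_1_2]

lemma cW_3_3_0 : (W 3 3 0).card = 0 := by
  have := cW0 1 3
  norm_num at this
  rw [this]
  norm_num [cW_2_3_0, cW_2_3_1, cW_2_3_2]

lemma cW_3_3_1 : (W 3 3 1).card = 0 := by
  have := cW1 1 3 (by norm_num)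
  norm_num at this
  rw [this]
  norm_num [cW_2_4_0, cW_2_4_1]

lemma cW_3_3_2 : (W 3 3 2).card = 1 := by
  have := cW2 1 2
  norm_num at this
  rw [this]
  norm_num [cW_2_2_0, cW_2_2_2]

lemma cW_3_4_0 : (W 3 4 0).card = 0 := by
  have := cW0 1 4
  norm_num at this
  rw [this]
  norm_num [cW_2_4_0, cW_2_4_1, cW_2_4_2]

lemma cW_3_4_1 : (W 3 4 1).card = 0 := by
  have := cW1 1 4 (by norm_num)
  norm_num at this
  rw [this]
  norm_num [cW_2_5_0, cW_2_5_1]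

lemma cW_3_4_2 : (W 3 4 2).card = 0 := by
  have := cW2 1 3
  norm_num at this
  rw [this]
  norm_num [cW_2_3_0, cW_2_3_2]

lemma cW_3_5_0 : (W 3 5 0).card = 0 := by
  have := cW0 1 5
  norm_num at this
  rw [this]
  norm_num [cW_2_5_0, cW_2_5_1, cW_2_5_2]

lemma cW_3_5_1 : (W 3 5 1).card = 0 := by have := cW1' 1; norm_num at this ⊢; exact this

lemma cW_3_5_2 : (W 3 5 2).card = 0 := by
  have := cW2 1 4
  norm_num at this
  rw [this]
  norm_num [cW_2_4_0, cW_2_4_2]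

lemma cW_4_0_0 : (W 4 0 0).card = 2 := by
  have := cW0 2 0
  norm_num at this
  rw [this]
  norm_num [cW_3_0_0, cW_3_0_1, cW_3_0_2]

lemma cW_4_0_1 : (W 4 0 1).card = 2 := by
  have := cW1 2 0 (by norm_num)
  norm_num at this
  rw [this]
  norm_num [cW_3_1_0, cW_3_1_1]

lemma cW_4_0_2 : (W 4 0 2).card = 0 := by have := cW2' 2; norm_num at this ⊢; exact this

lemma cW_4_1_0 : (W 4 1 0).card = 3 := by
  have := cW0 2 1
  norm_num at this
  rw [this]
  norm_num [cW_3_1_0, cW_3_1_1, cW_3_1_2]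

lemma cW_4_1_1 : (W 4 1 1).card = 1 := by
  have := cW1 2 1 (by norm_num)
  norm_num at this
  rw [this]
  norm_num [cW_3_2_0, cW_3_2_1]

lemma cW_4_1_2 : (W 4 1 2).card = 1 := by
  have := cW2 2 0
  norm_num at this
  rw [this]
  norm_num [cW_3_0_0, cW_3_0_2]

lemma cW_4_2_0 : (W 4 2 0).card = 3 := by
  have := cW0 2 2
  norm_num at this
  rw [this]
  norm_num [cW_3_2_0, cW_3_2_1, cW_3_2_2]

lemma cW_4_2_1 : (W 4 2 1).card = 0 := by
  have := cW1 2 2 (by norm_num)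
  norm_num at this
  rw [this]
  norm_num [cW_3_3_0, cW_3_3_1]

lemma cW_4_2_2 : (W 4 2 2).card = 3 := by
  have := cW2 2 1
  norm_num at this
  rw [this]
  norm_num [cW_3_1_0, cW_3_1_2]

lemma cW_4_3_0 : (W 4 3 0).card = 1 := by
  have := cW0 2 3
  norm_num at this
  rw [this]
  norm_num [cW_3_3_0, cW_3_3_1, cW_3_3_2]

lemma cW_4_3_1 : (W 4 3 1).card = 0 := by
  have := cW1 2 3 (by norm_num)
  norm_num at this
  rw [this]
  norm_num [cW_3_4_0, cW_3_4_1]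

lemma cW_4_3_2 : (W 4 3 2).card = 3 := by
  have := cW2 2 2
  norm_num at this
  rw [this]
  norm_num [cW_3_2_0, cW_3_2_2]

lemma cW_4_4_0 : (W 4 4 0).card = 0 := by
  have := cW0 2 4
  norm_num at this
  rw [this]
  norm_num [cW_3_4_0, cW_3_4_1, cW_3_4_2]

lemma cW_4_4_1 : (W 4 4 1).card = 0 := by
  have := cW1 2 4 (by norm_num)
  norm_num at this
  rw [this]
  norm_num [cW_3_5_0, cW_3_5_1]

lemma cW_4_4_2 : (W 4 4 2).card = 1 := by
  have := cW2 2 3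
  norm_num at this
  rw [this]
  norm_num [cW_3_3_0, cW_3_3_2]

lemma cW_4_5_0 : (W 4 5 0).card = 0 := by
  have := cW0 2 5
  norm_num at this
  rw [this]
  norm_num [cW_3_5_0, cW_3_5_1, cW_3_5_2]

lemma cW_4_5_1 : (W 4 5 1).card = 0 := by have := cW1' 2; norm_num at this ⊢; exact this

lemma cW_4_5_2 : (W 4 5 2).card = 0 := by
  have := cW2 2 4
  norm_num at this
  rw [this]
  norm_num [cW_3_4_0, cW_3_4_2]

lemma cW_5_0_0 : (W 5 0 0).card = 4 := by
  have := cW0 3 0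
  norm_num at this
  rw [this]
  norm_num [cW_4_0_0, cW_4_0_1, cW_4_0_2]

lemma cW_5_0_1 : (W 5 0 1).card = 4 := by
  have := cW1 3 0 (by norm_num)
  norm_num at this
  rw [this]
  norm_num [cW_4_1_0, cW_4_1_1]

lemma cW_5_0_2 : (W 5 0 2).card = 0 := by have := cW2' 3; norm_num at this ⊢; exact this

lemma cW_5_1_0 : (W 5 1 0).card = 5 := by
  have := cW0 3 1
  norm_num at this
  rw [this]
  norm_num [cW_4_1_0, cW_4_1_1, cW_4_1_2]

lemma cW_5_1_1 : (W 5 1 1).card = 3 := by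
  have := cW1 3 1 (by norm_num)
  norm_num at this
  rw [this]
  norm_num [cW_4_2_0, cW_4_2_1]

lemma cW_5_1_2 : (W 5 1 2).card = 2 := by
  have := cW2 3 0
  norm_num at this
  rw [this]
  norm_num [cW_4_0_0, cW_4_0_2]

lemma cW_5_2_0 : (W 5 2 0).card = 6 := by
  have := cW0 3 2
  norm_num at this
  rw [this]
  norm_num [cW_4_2_0, cW_4_2_1, cW_4_2_2]

lemma cW_5_2_1 : (W 5 2 1).card = 1 := by
  have := cW1 3 2 (by norm_num)
  norm_num at this
  rw [this]
  norm_num [cW_4_3_0, cW_4_3_1]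

lemma cW_5_2_2 : (W 5 2 2).card = 4 := by
  have := cW2 3 1
  norm_num at this
  rw [this]
  norm_num [cW_4_1_0, cW_4_1_2]

lemma cW_5_3_0 : (W 5 3 0).card = 4 := by
  have := cW0 3 3
  norm_num at this
  rw [this]
  norm_num [cW_4_3_0, cW_4_3_1, cW_4_3_2]

lemma cW_5_3_1 : (W 5 3 1).card = 0 := by
  have := cW1 3 3 (by norm_num)
  norm_num at this
  rw [this]
  norm_num [cW_4_4_0, cW_4_4_1]

lemma cW_5_3_2 : (W 5 3 2).card = 6 := by
  have := cW2 3 2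
  norm_num at this
  rw [this]
  norm_num [cW_4_2_0, cW_4_2_2]

lemma cW_5_4_0 : (W 5 4 0).card = 1 := by
  have := cW0 3 4
  norm_num at this
  rw [this]
  norm_num [cW_4_4_0, cW_4_4_1, cW_4_4_2]

lemma cW_5_4_1 : (W 5 4 1).card = 0 := by
  have := cW1 3 4 (by norm_num)
  norm_num at this
  rw [this]
  norm_num [cW_4_5_0, cW_4_5_1]

lemma cW_5_4_2 : (W 5 4 2).card = 4 := by
  have := cW2 3 3
  norm_num at this
  rw [this]
  norm_num [cW_4_3_0, cW_4_3_2]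

lemma cW_5_5_0 : (W 5 5 0).card = 0 := by
  have := cW0 3 5
  norm_num at this
  rw [this]
  norm_num [cW_4_5_0, cW_4_5_1, cW_4_5_2]

lemma cW_5_5_1 : (W 5 5 1).card = 0 := by have := cW1' 3; norm_num at this ⊢; exact this

lemma cW_5_5_2 : (W 5 5 2).card = 1 := by
  have := cW2 3 4
  norm_num at this
  rw [this]
  norm_num [cW_4_4_0, cW_4_4_2]

lemma cW_6_0_0 : (W 6 0 0).card = 8 := by
  have := cW0 4 0
  norm_num at this
  rw [this]
  norm_num [cW_5_0_0, cW_5_0_1, cW_5_0_2]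

lemma cW_6_0_1 : (W 6 0 1).card = 8 := by
  have := cW1 4 0 (by norm_num)
  norm_num at this
  rw [this]
  norm_num [cW_5_1_0, cW_5_1_1]

lemma cW_6_0_2 : (W 6 0 2).card = 0 := by have := cW2' 4; norm_num at this ⊢; exact this

lemma cW_6_1_0 : (W 6 1 0).card = 10 := by
  have := cW0 4 1
  norm_num at this
  rw [this]
  norm_num [cW_5_1_0, cW_5_1_1, cW_5_1_2]

lemma cW_6_1_1 : (W 6 1 1).card = 7 := by
  have := cW1 4 1 (by norm_num)
  norm_num at this
  rw [this]
  norm_num [cW_5_2_0, cW_5_2_1]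

lemma cW_6_1_2 : (W 6 1 2).card = 4 := by
  have := cW2 4 0
  norm_num at this
  rw [this]
  norm_num [cW_5_0_0, cW_5_0_2]

lemma cW_6_2_0 : (W 6 2 0).card = 11 := by
  have := cW0 4 2
  norm_num at this
  rw [this]
  norm_num [cW_5_2_0, cW_5_2_1, cW_5_2_2]

lemma cW_6_2_1 : (W 6 2 1).card = 4 := by
  have := cW1 4 2 (by norm_num)
  norm_num at this
  rw [this]
  norm_num [cW_5_3_0, cW_5_3_1]

lemma cW_6_2_2 : (W 6 2 2).card = 7 := by
  have := cW2 4 1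
  norm_num at this
  rw [this]
  norm_num [cW_5_1_0, cW_5_1_2]

lemma cW_6_3_0 : (W 6 3 0).card = 10 := by
  have := cW0 4 3
  norm_num at this
  rw [this]
  norm_num [cW_5_3_0, cW_5_3_1, cW_5_3_2]

lemma cW_6_3_1 : (W 6 3 1).card = 1 := by
  have := cW1 4 3 (by norm_num)
  norm_num at this
  rw [this]
  norm_num [cW_5_4_0, cW_5_4_1]

lemma cW_6_3_2 : (W 6 3 2).card = 10 := by
  have := cW2 4 2
  norm_num at this
  rw [this]
  norm_num [cW_5_2_0, cW_5_2_2]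

lemma cW_6_4_0 : (W 6 4 0).card = 5 := by
  have := cW0 4 4
  norm_num at this
  rw [this]
  norm_num [cW_5_4_0, cW_5_4_1, cW_5_4_2]

lemma cW_6_4_1 : (W 6 4 1).card = 0 := by
  have := cW1 4 4 (by norm_num)
  norm_num at this
  rw [this]
  norm_num [cW_5_5_0, cW_5_5_1]

lemma cW_6_4_2 : (W 6 4 2).card = 10 := by
  have := cW2 4 3
  norm_num at this
  rw [this]
  norm_num [cW_5_3_0, cW_5_3_2]

lemma cW_6_5_0 : (W 6 5 0).card = 1 := by
  have := cW0 4 5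
  norm_num at this
  rw [this]
  norm_num [cW_5_5_0, cW_5_5_1, cW_5_5_2]

lemma cW_6_5_1 : (W 6 5 1).card = 0 := by have := cW1' 4; norm_num at this ⊢; exact this

lemma cW_6_5_2 : (W 6 5 2).card = 5 := by
  have := cW2 4 4
  norm_num at this
  rw [this]
  norm_num [cW_5_4_0, cW_5_4_2]

lemma cW_7_0_0 : (W 7 0 0).card = 16 := by
  have := cW0 5 0
  norm_num at this
  rw [this]
  norm_num [cW_6_0_0, cW_6_0_1, cW_6_0_2]

lemma cW_7_0_1 : (W 7 0 1).card = 17 := by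
  have := cW1 5 0 (by norm_num)
  norm_num at this
  rw [this]
  norm_num [cW_6_1_0, cW_6_1_1]

lemma cW_7_0_2 : (W 7 0 2).card = 0 := by have := cW2' 5; norm_num at this ⊢; exact this

lemma cW_7_1_0 : (W 7 1 0).card = 21 := by
  have := cW0 5 1
  norm_num at this
  rw [this]
  norm_num [cW_6_1_0, cW_6_1_1, cW_6_1_2]

lemma cW_7_1_1 : (W 7 1 1).card = 15 := by
  have := cW1 5 1 (by norm_num)
  norm_num at this
  rw [this]
  norm_num [cW_6_2_0, cW_6_2_1]

lemma cW_7_1_2 : (W 7 1 2).card = 8 := by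
  have := cW2 5 0
  norm_num at this
  rw [this]
  norm_num [cW_6_0_0, cW_6_0_2]

lemma cW_7_2_0 : (W 7 2 0).card = 22 := by
  have := cW0 5 2
  norm_num at this
  rw [this]
  norm_num [cW_6_2_0, cW_6_2_1, cW_6_2_2]

lemma cW_7_2_1 : (W 7 2 1).card = 11 := by
  have := cW1 5 2 (by norm_num)
  norm_num at this
  rw [this]
  norm_num [cW_6_3_0, cW_6_3_1]

lemma cW_7_2_2 : (W 7 2 2).card = 14 := by
  have := cW2 5 1
  norm_num at this
  rw [this]
  norm_num [cW_6_1_0, cW_6_1_2]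

lemma cW_7_3_0 : (W 7 3 0).card = 21 := by
  have := cW0 5 3
  norm_num at this
  rw [this]
  norm_num [cW_6_3_0, cW_6_3_1, cW_6_3_2]

lemma cW_7_3_1 : (W 7 3 1).card = 5 := by
  have := cW1 5 3 (by norm_num)
  norm_num at this
  rw [this]
  norm_num [cW_6_4_0, cW_6_4_1]

lemma cW_7_3_2 : (W 7 3 2).card = 18 := by
  have := cW2 5 2
  norm_num at this
  rw [this]
  norm_num [cW_6_2_0, cW_6_2_2]

lemma cW_7_4_0 : (W 7 4 0).card = 15 := by
  have := cW0 5 4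
  norm_num at this
  rw [this]
  norm_num [cW_6_4_0, cW_6_4_1, cW_6_4_2]

lemma cW_7_4_1 : (W 7 4 1).card = 1 := by
  have := cW1 5 4 (by norm_num)
  norm_num at this
  rw [this]
  norm_num [cW_6_5_0, cW_6_5_1]

lemma cW_7_4_2 : (W 7 4 2).card = 20 := by
  have := cW2 5 3
  norm_num at this
  rw [this]
  norm_num [cW_6_3_0, cW_6_3_2]

lemma cW_7_5_0 : (W 7 5 0).card = 6 := by
  have := cW0 5 5
  norm_num at this
  rw [this]
  norm_num [cW_6_5_0, cW_6_5_1, cW_6_5_2]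

lemma cW_7_5_1 : (W 7 5 1).card = 0 := by have := cW1' 5; norm_num at this ⊢; exact this

lemma cW_7_5_2 : (W 7 5 2).card = 15 := by
  have := cW2 5 4
  norm_num at this
  rw [this]
  norm_num [cW_6_4_0, cW_6_4_2]

lemma cW_8_0_0 : (W 8 0 0).card = 33 := by
  have := cW0 6 0
  norm_num at this
  rw [this]
  norm_num [cW_7_0_0, cW_7_0_1, cW_7_0_2]

lemma cW_8_0_1 : (W 8 0 1).card = 36 := by
  have := cW1 6 0 (by norm_num)
  norm_num at this
  rw [this]
  norm_num [cW_7_1_0, cW_7_1_1]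

lemma cW_8_0_2 : (W 8 0 2).card = 0 := by have := cW2' 6; norm_num at this ⊢; exact this

lemma cW_8_1_0 : (W 8 1 0).card = 44 := by
  have := cW0 6 1
  norm_num at this
  rw [this]
  norm_num [cW_7_1_0, cW_7_1_1, cW_7_1_2]

lemma cW_8_1_1 : (W 8 1 1).card = 33 := by
  have := cW1 6 1 (by norm_num)
  norm_num at this
  rw [this]
  norm_num [cW_7_2_0, cW_7_2_1]

lemma cW_8_1_2 : (W 8 1 2).card = 16 := by
  have := cW2 6 0
  norm_num at this
  rw [this]
  norm_num [cW_7_0_0, cW_7_0_2]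

lemma cW_8_2_0 : (W 8 2 0).card = 47 := by
  have := cW0 6 2
  norm_num at this
  rw [this]
  norm_num [cW_7_2_0, cW_7_2_1, cW_7_2_2]

lemma cW_8_2_1 : (W 8 2 1).card = 26 := by
  have := cW1 6 2 (by norm_num)
  norm_num at this
  rw [this]
  norm_num [cW_7_3_0, cW_7_3_1]

lemma cW_8_2_2 : (W 8 2 2).card = 29 := by
  have := cW2 6 1
  norm_num at this
  rw [this]
  norm_num [cW_7_1_0, cW_7_1_2]

lemma cW_8_3_0 : (W 8 3 0).card = 44 := by
  have := cW0 6 3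
  norm_num at this
  rw [this]
  norm_num [cW_7_3_0, cW_7_3_1, cW_7_3_2]

lemma cW_8_3_1 : (W 8 3 1).card = 16 := by
  have := cW1 6 3 (by norm_num)
  norm_num at this
  rw [this]
  norm_num [cW_7_4_0, cW_7_4_1]

lemma cW_8_3_2 : (W 8 3 2).card = 36 := by
  have := cW2 6 2
  norm_num at this
  rw [this]
  norm_num [cW_7_2_0, cW_7_2_2]

lemma cW_8_4_0 : (W 8 4 0).card = 36 := by
  have := cW0 6 4
  norm_num at this
  rw [this]
  norm_num [cW_7_4_0, cW_7_4_1, cW_7_4_2]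

lemma cW_8_4_1 : (W 8 4 1).card = 6 := by
  have := cW1 6 4 (by norm_num)
  norm_num at this
  rw [this]
  norm_num [cW_7_5_0, cW_7_5_1]

lemma cW_8_4_2 : (W 8 4 2).card = 39 := by
  have := cW2 6 3
  norm_num at this
  rw [this]
  norm_num [cW_7_3_0, cW_7_3_2]

lemma cW_8_5_0 : (W 8 5 0).card = 21 := by
  have := cW0 6 5
  norm_num at this
  rw [this]
  norm_num [cW_7_5_0, cW_7_5_1, cW_7_5_2]

lemma cW_8_5_1 : (W 8 5 1).card = 0 := by have := cW1' 6; norm_num at this ⊢; exact this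

lemma cW_8_5_2 : (W 8 5 2).card = 35 := by
  have := cW2 6 4
  norm_num at this
  rw [this]
  norm_num [cW_7_4_0, cW_7_4_2]

lemma cW_9_0_0 : (W 9 0 0).card = 69 := by
  have := cW0 7 0
  norm_num at this
  rw [this]
  norm_num [cW_8_0_0, cW_8_0_1, cW_8_0_2]

lemma cW_9_0_1 : (W 9 0 1).card = 77 := by
  have := cW1 7 0 (by norm_num)
  norm_num at this
  rw [this]
  norm_num [cW_8_1_0, cW_8_1_1]

lemma cW_9_0_2 : (W 9 0 2).card = 0 := by have := cW2' 7; norm_num at this ⊢; exact this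

lemma cW_9_1_0 : (W 9 1 0).card = 93 := by
  have := cW0 7 1
  norm_num at this
  rw [this]
  norm_num [cW_8_1_0, cW_8_1_1, cW_8_1_2]

lemma cW_9_1_1 : (W 9 1 1).card = 73 := by
  have := cW1 7 1 (by norm_num)
  norm_num at this
  rw [this]
  norm_num [cW_8_2_0, cW_8_2_1]

lemma cW_9_1_2 : (W 9 1 2).card = 33 := by
  have := cW2 7 0
  norm_num at this
  rw [this]
  norm_num [cW_8_0_0, cW_8_0_2]

lemma cW_9_2_0 : (W 9 2 0).card = 102 := by
  have := cW0 7 2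
  norm_num at this
  rw [this]
  norm_num [cW_8_2_0, cW_8_2_1, cW_8_2_2]

lemma cW_9_2_1 : (W 9 2 1).card = 60 := by
  have := cW1 7 2 (by norm_num)
  norm_num at this
  rw [this]
  norm_num [cW_8_3_0, cW_8_3_1]

lemma cW_9_2_2 : (W 9 2 2).card = 60 := by
  have := cW2 7 1
  norm_num at this
  rw [this]
  norm_num [cW_8_1_0, cW_8_1_2]

lemma cW_9_3_0 : (W 9 3 0).card = 96 := by
  have := cW0 7 3
  norm_num at this
  rw [this]
  norm_num [cW_8_3_0, cW_8_3_1, cW_8_3_2]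

lemma cW_9_3_1 : (W 9 3 1).card = 42 := by
  have := cW1 7 3 (by norm_num)
  norm_num at this
  rw [this]
  norm_num [cW_8_4_0, cW_8_4_1]

lemma cW_9_3_2 : (W 9 3 2).card = 76 := by
  have := cW2 7 2
  norm_num at this
  rw [this]
  norm_num [cW_8_2_0, cW_8_2_2]

lemma cW_9_4_0 : (W 9 4 0).card = 81 := by
  have := cW0 7 4
  norm_num at this
  rw [this]
  norm_num [cW_8_4_0, cW_8_4_1, cW_8_4_2]

lemma cW_9_4_1 : (W 9 4 1).card = 21 := by
  have := cW1 7 4 (by norm_num)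
  norm_num at this
  rw [this]
  norm_num [cW_8_5_0, cW_8_5_1]

lemma cW_9_4_2 : (W 9 4 2).card = 80 := by
  have := cW2 7 3
  norm_num at this
  rw [this]
  norm_num [cW_8_3_0, cW_8_3_2]

lemma cW_9_5_0 : (W 9 5 0).card = 56 := by
  have := cW0 7 5
  norm_num at this
  rw [this]
  norm_num [cW_8_5_0, cW_8_5_1, cW_8_5_2]

lemma cW_9_5_1 : (W 9 5 1).card = 0 := by have := cW1' 7; norm_num at this ⊢; exact this

lemma cW_9_5_2 : (W 9 5 2).card = 75 := by
  have := cW2 7 4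
  norm_num at this
  rw [this]
  norm_num [cW_8_4_0, cW_8_4_2]

lemma cW_10_0_0 : (W 10 0 0).card = 146 := by
  have := cW0 8 0
  norm_num at this
  rw [this]
  norm_num [cW_9_0_0, cW_9_0_1, cW_9_0_2]

lemma cW_10_0_1 : (W 10 0 1).card = 166 := by
  have := cW1 8 0 (by norm_num)
  norm_num at this
  rw [this]
  norm_num [cW_9_1_0, cW_9_1_1]

lemma cW_10_0_2 : (W 10 0 2).card = 0 := by have := cW2' 8; norm_num at this ⊢; exact this

lemma cW_10_1_0 : (W 10 1 0).card = 199 := by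
  have := cW0 8 1
  norm_num at this
  rw [this]
  norm_num [cW_9_1_0, cW_9_1_1, cW_9_1_2]

lemma cW_10_1_1 : (W 10 1 1).card = 162 := by
  have := cW1 8 1 (by norm_num)
  norm_num at this
  rw [this]
  norm_num [cW_9_2_0, cW_9_2_1]

lemma cW_10_1_2 : (W 10 1 2).card = 69 := by
  have := cW2 8 0
  norm_num at this
  rw [this]
  norm_num [cW_9_0_0, cW_9_0_2]

lemma cW_10_2_0 : (W 10 2 0).card = 222 := by
  have := cW0 8 2
  norm_num at this
  rw [this]
  norm_num [cW_9_2_0, cW_9_2_1, cW_9_2_2]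

lemma cW_10_2_1 : (W 10 2 1).card = 138 := by
  have := cW1 8 2 (by norm_num)
  norm_num at this
  rw [this]
  norm_num [cW_9_3_0, cW_9_3_1]

lemma cW_10_2_2 : (W 10 2 2).card = 126 := by
  have := cW2 8 1
  norm_num at this
  rw [this]
  norm_num [cW_9_1_0, cW_9_1_2]

lemma cW_10_3_0 : (W 10 3 0).card = 214 := by
  have := cW0 8 3
  norm_num at this
  rw [this]
  norm_num [cW_9_3_0, cW_9_3_1, cW_9_3_2]

lemma cW_10_3_1 : (W 10 3 1).card = 102 := by
  have := cW1 8 3 (by norm_num)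
  norm_num at this
  rw [this]
  norm_num [cW_9_4_0, cW_9_4_1]

lemma cW_10_3_2 : (W 10 3 2).card = 162 := by
  have := cW2 8 2
  norm_num at this
  rw [this]
  norm_num [cW_9_2_0, cW_9_2_2]

lemma cW_10_4_0 : (W 10 4 0).card = 182 := by
  have := cW0 8 4
  norm_num at this
  rw [this]
  norm_num [cW_9_4_0, cW_9_4_1, cW_9_4_2]

lemma cW_10_4_1 : (W 10 4 1).card = 56 := by
  have := cW1 8 4 (by norm_num)
  norm_num at this
  rw [this]
  norm_num [cW_9_5_0, cW_9_5_1]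

lemma cW_10_4_2 : (W 10 4 2).card = 172 := by
  have := cW2 8 3
  norm_num at this
  rw [this]
  norm_num [cW_9_3_0, cW_9_3_2]

lemma cW_10_5_0 : (W 10 5 0).card = 131 := by
  have := cW0 8 5
  norm_num at this
  rw [this]
  norm_num [cW_9_5_0, cW_9_5_1, cW_9_5_2]

lemma cW_10_5_1 : (W 10 5 1).card = 0 := by have := cW1' 8; norm_num at this ⊢; exact this

lemma cW_10_5_2 : (W 10 5 2).card = 161 := by
  have := cW2 8 4
  norm_num at this
  rw [this]
  norm_num [cW_9_4_0, cW_9_4_2]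

lemma cW_11_0_0 : (W 11 0 0).card = 312 := by
  have := cW0 9 0
  norm_num at this
  rw [this]
  norm_num [cW_10_0_0, cW_10_0_1, cW_10_0_2]

lemma cW_11_0_1 : (W 11 0 1).card = 361 := by
  have := cW1 9 0 (by norm_num)
  norm_num at this
  rw [this]
  norm_num [cW_10_1_0, cW_10_1_1]

lemma cW_11_0_2 : (W 11 0 2).card = 0 := by have := cW2' 9; norm_num at this ⊢; exact this

lemma cW_11_1_0 : (W 11 1 0).card = 430 := by
  have := cW0 9 1
  norm_num at this
  rw [this]
  norm_num [cW_10_1_0, cW_10_1_1, cW_10_1_2]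

lemma cW_11_1_1 : (W 11 1 1).card = 360 := by
  have := cW1 9 1 (by norm_num)
  norm_num at this
  rw [this]
  norm_num [cW_10_2_0, cW_10_2_1]

lemma cW_11_1_2 : (W 11 1 2).card = 146 := by
  have := cW2 9 0
  norm_num at this
  rw [this]
  norm_num [cW_10_0_0, cW_10_0_2]

lemma cW_11_2_0 : (W 11 2 0).card = 486 := by
  have := cW0 9 2
  norm_num at this
  rw [this]
  norm_num [cW_10_2_0, cW_10_2_1, cW_10_2_2]

lemma cW_11_2_1 : (W 11 2 1).card = 316 := by
  have := cW1 9 2 (by norm_num)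
  norm_num at this
  rw [this]
  norm_num [cW_10_3_0, cW_10_3_1]

lemma cW_11_2_2 : (W 11 2 2).card = 268 := by
  have := cW2 9 1
  norm_num at this
  rw [this]
  norm_num [cW_10_1_0, cW_10_1_2]

lemma cW_11_3_0 : (W 11 3 0).card = 478 := by
  have := cW0 9 3
  norm_num at this
  rw [this]
  norm_num [cW_10_3_0, cW_10_3_1, cW_10_3_2]

lemma cW_11_3_1 : (W 11 3 1).card = 238 := by
  have := cW1 9 3 (by norm_num)
  norm_num at this
  rw [this]
  norm_num [cW_10_4_0, cW_10_4_1]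

lemma cW_11_3_2 : (W 11 3 2).card = 348 := by
  have := cW2 9 2
  norm_num at this
  rw [this]
  norm_num [cW_10_2_0, cW_10_2_2]

lemma cW_11_4_0 : (W 11 4 0).card = 410 := by
  have := cW0 9 4
  norm_num at this
  rw [this]
  norm_num [cW_10_4_0, cW_10_4_1, cW_10_4_2]

lemma cW_11_4_1 : (W 11 4 1).card = 131 := by
  have := cW1 9 4 (by norm_num)
  norm_num at this
  rw [this]
  norm_num [cW_10_5_0, cW_10_5_1]

lemma cW_11_4_2 : (W 11 4 2).card = 376 := by
  have := cW2 9 3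
  norm_num at this
  rw [this]
  norm_num [cW_10_3_0, cW_10_3_2]

lemma cW_11_5_0 : (W 11 5 0).card = 292 := by
  have := cW0 9 5
  norm_num at this
  rw [this]
  norm_num [cW_10_5_0, cW_10_5_1, cW_10_5_2]

lemma cW_11_5_1 : (W 11 5 1).card = 0 := by have := cW1' 9; norm_num at this ⊢; exact this

lemma cW_11_5_2 : (W 11 5 2).card = 354 := by
  have := cW2 9 4
  norm_num at this
  rw [this]
  norm_num [cW_10_4_0, cW_10_4_2]

lemma cW_12_0_0 : (W 12 0 0).card = 673 := by
  have := cW0 10 0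
  norm_num at this
  rw [this]
  norm_num [cW_11_0_0, cW_11_0_1, cW_11_0_2]

lemma cW_12_0_1 : (W 12 0 1).card = 790 := by
  have := cW1 10 0 (by norm_num)
  norm_num at this
  rw [this]
  norm_num [cW_11_1_0, cW_11_1_1]

lemma cW_12_0_2 : (W 12 0 2).card = 0 := by have := cW2' 10; norm_num at this ⊢; exact this

lemma cW_12_1_0 : (W 12 1 0).card = 936 := by
  have := cW0 10 1
  norm_num at this
  rw [this]
  norm_num [cW_11_1_0, cW_11_1_1, cW_11_1_2]

lemma cW_12_1_1 : (W 12 1 1).card = 802 := by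
  have := cW1 10 1 (by norm_num)
  norm_num at this
  rw [this]
  norm_num [cW_11_2_0, cW_11_2_1]

lemma cW_12_1_2 : (W 12 1 2).card = 312 := by
  have := cW2 10 0
  norm_num at this
  rw [this]
  norm_num [cW_11_0_0, cW_11_0_2]

lemma cW_12_2_0 : (W 12 2 0).card = 1070 := by
  have := cW0 10 2
  norm_num at this
  rw [this]
  norm_num [cW_11_2_0, cW_11_2_1, cW_11_2_2]

lemma cW_12_2_1 : (W 12 2 1).card = 716 := by
  have := cW1 10 2 (by norm_num)
  norm_num at this
  rw [this]
  norm_num [cW_11_3_0, cW_11_3_1]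

lemma cW_12_2_2 : (W 12 2 2).card = 576 := by
  have := cW2 10 1
  norm_num at this
  rw [this]
  norm_num [cW_11_1_0, cW_11_1_2]

lemma cW_12_3_0 : (W 12 3 0).card = 1064 := by
  have := cW0 10 3
  norm_num at this
  rw [this]
  norm_num [cW_11_3_0, cW_11_3_1, cW_11_3_2]

lemma cW_12_3_1 : (W 12 3 1).card = 541 := by
  have := cW1 10 3 (by norm_num)
  norm_num at this
  rw [this]
  norm_num [cW_11_4_0, cW_11_4_1]

lemma cW_12_3_2 : (W 12 3 2).card = 754 := by
  have := cW2 10 2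
  norm_num at this
  rw [this]
  norm_num [cW_11_2_0, cW_11_2_2]

lemma cW_12_4_0 : (W 12 4 0).card = 917 := by
  have := cW0 10 4
  norm_num at this
  rw [this]
  norm_num [cW_11_4_0, cW_11_4_1, cW_11_4_2]

lemma cW_12_4_1 : (W 12 4 1).card = 292 := by
  have := cW1 10 4 (by norm_num)
  norm_num at this
  rw [this]
  norm_num [cW_11_5_0, cW_11_5_1]

lemma cW_12_4_2 : (W 12 4 2).card = 826 := by
  have := cW2 10 3
  norm_num at this
  rw [this]
  norm_num [cW_11_3_0, cW_11_3_2]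

lemma cW_12_5_0 : (W 12 5 0).card = 646 := by
  have := cW0 10 5
  norm_num at this
  rw [this]
  norm_num [cW_11_5_0, cW_11_5_1, cW_11_5_2]

lemma cW_12_5_1 : (W 12 5 1).card = 0 := by have := cW1' 10; norm_num at this ⊢; exact this

lemma cW_12_5_2 : (W 12 5 2).card = 786 := by
  have := cW2 10 4
  norm_num at this
  rw [this]
  norm_num [cW_11_4_0, cW_11_4_2]

lemma cW_13_0_0 : (W 13 0 0).card = 1463 := by
  have := cW0 11 0
  norm_num at this
  rw [this]
  norm_num [cW_12_0_0, cW_12_0_1, cW_12_0_2]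

lemma cW_13_0_1 : (W 13 0 1).card = 1738 := by
  have := cW1 11 0 (by norm_num)
  norm_num at this
  rw [this]
  norm_num [cW_12_1_0, cW_12_1_1]

lemma cW_13_0_2 : (W 13 0 2).card = 0 := by have := cW2' 11; norm_num at this ⊢; exact this

lemma cW_13_1_0 : (W 13 1 0).card = 2050 := by
  have := cW0 11 1
  norm_num at this
  rw [this]
  norm_num [cW_12_1_0, cW_12_1_1, cW_12_1_2]

lemma cW_13_1_1 : (W 13 1 1).card = 1786 := by
  have := cW1 11 1 (by norm_num)
  norm_num at this
  rw [this]
  norm_num [cW_12_2_0, cW_12_2_1]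

lemma cW_13_1_2 : (W 13 1 2).card = 673 := by
  have := cW2 11 0
  norm_num at this
  rw [this]
  norm_num [cW_12_0_0, cW_12_0_2]

lemma cW_13_2_0 : (W 13 2 0).card = 2362 := by
  have := cW0 11 2
  norm_num at this
  rw [this]
  norm_num [cW_12_2_0, cW_12_2_1, cW_12_2_2]

lemma cW_13_2_1 : (W 13 2 1).card = 1605 := by
  have := cW1 11 2 (by norm_num)
  norm_num at this
  rw [this]
  norm_num [cW_12_3_0, cW_12_3_1]

lemma cW_13_2_2 : (W 13 2 2).card = 1248 := by
  have := cW2 11 1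
  norm_num at this
  rw [this]
  norm_num [cW_12_1_0, cW_12_1_2]

lemma cW_13_3_0 : (W 13 3 0).card = 2359 := by
  have := cW0 11 3
  norm_num at this
  rw [this]
  norm_num [cW_12_3_0, cW_12_3_1, cW_12_3_2]

lemma cW_13_3_1 : (W 13 3 1).card = 1209 := by
  have := cW1 11 3 (by norm_num)
  norm_num at this
  rw [this]
  norm_num [cW_12_4_0, cW_12_4_1]

lemma cW_13_3_2 : (W 13 3 2).card = 1646 := by
  have := cW2 11 2
  norm_num at this
  rw [this]
  norm_num [cW_12_2_0, cW_12_2_2]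

lemma cW_13_4_0 : (W 13 4 0).card = 2035 := by
  have := cW0 11 4
  norm_num at this
  rw [this]
  norm_num [cW_12_4_0, cW_12_4_1, cW_12_4_2]

lemma cW_13_4_1 : (W 13 4 1).card = 646 := by
  have := cW1 11 4 (by norm_num)
  norm_num at this
  rw [this]
  norm_num [cW_12_5_0, cW_12_5_1]

lemma cW_13_4_2 : (W 13 4 2).card = 1818 := by
  have := cW2 11 3
  norm_num at this
  rw [this]
  norm_num [cW_12_3_0, cW_12_3_2]

lemma cW_13_5_0 : (W 13 5 0).card = 1432 := by
  have := cW0 11 5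
  norm_num at this
  rw [this]
  norm_num [cW_12_5_0, cW_12_5_1, cW_12_5_2]

lemma cW_13_5_1 : (W 13 5 1).card = 0 := by have := cW1' 11; norm_num at this ⊢; exact this

lemma cW_13_5_2 : (W 13 5 2).card = 1743 := by
  have := cW2 11 4
  norm_num at this
  rw [this]
  norm_num [cW_12_4_0, cW_12_4_2]

lemma cW_14_0_0 : (W 14 0 0).card = 3201 := by
  have := cW0 12 0
  norm_num at this
  rw [this]
  norm_num [cW_13_0_0, cW_13_0_1, cW_13_0_2]

lemma cW_14_0_1 : (W 14 0 1).card = 3836 := by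
  have := cW1 12 0 (by norm_num)
  norm_num at this
  rw [this]
  norm_num [cW_13_1_0, cW_13_1_1]

lemma cW_14_0_2 : (W 14 0 2).card = 0 := by have := cW2' 12; norm_num at this ⊢; exact this

lemma cW_14_1_0 : (W 14 1 0).card = 4509 := by
  have := cW0 12 1
  norm_num at this
  rw [this]
  norm_num [cW_13_1_0, cW_13_1_1, cW_13_1_2]

lemma cW_14_1_1 : (W 14 1 1).card = 3967 := by
  have := cW1 12 1 (by norm_num)
  norm_num at this
  rw [this]
  norm_num [cW_13_2_0, cW_13_2_1]

lemma cW_14_1_2 : (W 14 1 2).card = 1463 := by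
  have := cW2 12 0
  norm_num at this
  rw [this]
  norm_num [cW_13_0_0, cW_13_0_2]

lemma cW_14_2_0 : (W 14 2 0).card = 5215 := by
  have := cW0 12 2
  norm_num at this
  rw [this]
  norm_num [cW_13_2_0, cW_13_2_1, cW_13_2_2]

lemma cW_14_2_1 : (W 14 2 1).card = 3568 := by
  have := cW1 12 2 (by norm_num)
  norm_num at this
  rw [this]
  norm_num [cW_13_3_0, cW_13_3_1]

lemma cW_14_2_2 : (W 14 2 2).card = 2723 := by
  have := cW2 12 1
  norm_num at this
  rw [this]
  norm_num [cW_13_1_0, cW_13_1_2]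

lemma cW_14_3_0 : (W 14 3 0).card = 5214 := by
  have := cW0 12 3
  norm_num at this
  rw [this]
  norm_num [cW_13_3_0, cW_13_3_1, cW_13_3_2]

lemma cW_14_3_1 : (W 14 3 1).card = 2681 := by
  have := cW1 12 3 (by norm_num)
  norm_num at this
  rw [this]
  norm_num [cW_13_4_0, cW_13_4_1]

lemma cW_14_3_2 : (W 14 3 2).card = 3610 := by
  have := cW2 12 2
  norm_num at this
  rw [this]
  norm_num [cW_13_2_0, cW_13_2_2]

lemma cW_14_4_0 : (W 14 4 0).card = 4499 := by
  have := cW0 12 4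
  norm_num at this
  rw [this]
  norm_num [cW_13_4_0, cW_13_4_1, cW_13_4_2]

lemma cW_14_4_1 : (W 14 4 1).card = 1432 := by
  have := cW1 12 4 (by norm_num)
  norm_num at this
  rw [this]
  norm_num [cW_13_5_0, cW_13_5_1]

lemma cW_14_4_2 : (W 14 4 2).card = 4005 := by
  have := cW2 12 3
  norm_num at this
  rw [this]
  norm_num [cW_13_3_0, cW_13_3_2]

lemma cW_14_5_0 : (W 14 5 0).card = 3175 := by
  have := cW0 12 5
  norm_num at this
  rw [this]
  norm_num [cW_13_5_0, cW_13_5_1, cW_13_5_2]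

lemma cW_14_5_1 : (W 14 5 1).card = 0 := by have := cW1' 12; norm_num at this ⊢; exact this

lemma cW_14_5_2 : (W 14 5 2).card = 3853 := by
  have := cW2 12 4
  norm_num at this
  rw [this]
  norm_num [cW_13_4_0, cW_13_4_2]

lemma cW_15_0_0 : (W 15 0 0).card = 7037 := by
  have := cW0 13 0
  norm_num at this
  rw [this]
  norm_num [cW_14_0_0, cW_14_0_1, cW_14_0_2]

lemma cW_15_0_1 : (W 15 0 1).card = 8476 := by
  have := cW1 13 0 (by norm_num)
  norm_num at this
  rw [this]
  norm_num [cW_14_1_0, cW_14_1_1]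

lemma cW_15_0_2 : (W 15 0 2).card = 0 := by have := cW2' 13; norm_num at this ⊢; exact this

lemma cW_15_1_0 : (W 15 1 0).card = 9939 := by
  have := cW0 13 1
  norm_num at this
  rw [this]
  norm_num [cW_14_1_0, cW_14_1_1, cW_14_1_2]

lemma cW_15_1_1 : (W 15 1 1).card = 8783 := by
  have := cW1 13 1 (by norm_num)
  norm_num at this
  rw [this]
  norm_num [cW_14_2_0, cW_14_2_1]

lemma cW_15_1_2 : (W 15 1 2).card = 3201 := by
  have := cW2 13 0
  norm_num at this
  rw [this]
  norm_num [cW_14_0_0, cW_14_0_2]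

lemma cW_15_2_0 : (W 15 2 0).card = 11506 := by
  have := cW0 13 2
  norm_num at this
  rw [this]
  norm_num [cW_14_2_0, cW_14_2_1, cW_14_2_2]

lemma cW_15_2_1 : (W 15 2 1).card = 7895 := by
  have := cW1 13 2 (by norm_num)
  norm_num at this
  rw [this]
  norm_num [cW_14_3_0, cW_14_3_1]

lemma cW_15_2_2 : (W 15 2 2).card = 5972 := by
  have := cW2 13 1
  norm_num at this
  rw [this]
  norm_num [cW_14_1_0, cW_14_1_2]

lemma cW_15_3_0 : (W 15 3 0).card = 11505 := by
  have := cW0 13 3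
  norm_num at this
  rw [this]
  norm_num [cW_14_3_0, cW_14_3_1, cW_14_3_2]

lemma cW_15_3_1 : (W 15 3 1).card = 5931 := by
  have := cW1 13 3 (by norm_num)
  norm_num at this
  rw [this]
  norm_num [cW_14_4_0, cW_14_4_1]

lemma cW_15_3_2 : (W 15 3 2).card = 7938 := by
  have := cW2 13 2
  norm_num at this
  rw [this]
  norm_num [cW_14_2_0, cW_14_2_2]

lemma cW_15_4_0 : (W 15 4 0).card = 9936 := by
  have := cW0 13 4
  norm_num at this
  rw [this]
  norm_num [cW_14_4_0, cW_14_4_1, cW_14_4_2]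

lemma cW_15_4_1 : (W 15 4 1).card = 3175 := by
  have := cW1 13 4 (by norm_num)
  norm_num at this
  rw [this]
  norm_num [cW_14_5_0, cW_14_5_1]

lemma cW_15_4_2 : (W 15 4 2).card = 8824 := by
  have := cW2 13 3
  norm_num at this
  rw [this]
  norm_num [cW_14_3_0, cW_14_3_2]

lemma cW_15_5_0 : (W 15 5 0).card = 7028 := by
  have := cW0 13 5
  norm_num at this
  rw [this]
  norm_num [cW_14_5_0, cW_14_5_1, cW_14_5_2]

lemma cW_15_5_1 : (W 15 5 1).card = 0 := by have := cW1' 13; norm_num at this ⊢; exact this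

lemma cW_15_5_2 : (W 15 5 2).card = 8504 := by
  have := cW2 13 4
  norm_num at this
  rw [this]
  norm_num [cW_14_4_0, cW_14_4_2]

lemma cW_16_0_0 : (W 16 0 0).card = 15513 := by
  have := cW0 14 0
  norm_num at this
  rw [this]
  norm_num [cW_15_0_0, cW_15_0_1, cW_15_0_2]

lemma cW_16_0_1 : (W 16 0 1).card = 18722 := by
  have := cW1 14 0 (by norm_num)
  norm_num at this
  rw [this]
  norm_num [cW_15_1_0, cW_15_1_1]

lemma cW_16_0_2 : (W 16 0 2).card = 0 := by have := cW2' 14; norm_num at this ⊢; exact this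

lemma cW_16_1_0 : (W 16 1 0).card = 21923 := by
  have := cW0 14 1
  norm_num at this
  rw [this]
  norm_num [cW_15_1_0, cW_15_1_1, cW_15_1_2]

lemma cW_16_1_1 : (W 16 1 1).card = 19401 := by
  have := cW1 14 1 (by norm_num)
  norm_num at this
  rw [this]
  norm_num [cW_15_2_0, cW_15_2_1]

lemma cW_16_1_2 : (W 16 1 2).card = 7037 := by
  have := cW2 14 0
  norm_num at this
  rw [this]
  norm_num [cW_15_0_0, cW_15_0_2]

lemma cW_16_2_0 : (W 16 2 0).card = 25373 := by
  have := cW0 14 2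
  norm_num at this
  rw [this]
  norm_num [cW_15_2_0, cW_15_2_1, cW_15_2_2]

lemma cW_16_2_1 : (W 16 2 1).card = 17436 := by
  have := cW1 14 2 (by norm_num)
  norm_num at this
  rw [this]
  norm_num [cW_15_3_0, cW_15_3_1]

lemma cW_16_2_2 : (W 16 2 2).card = 13140 := by
  have := cW2 14 1
  norm_num at this
  rw [this]
  norm_num [cW_15_1_0, cW_15_1_2]

lemma cW_16_3_0 : (W 16 3 0).card = 25374 := by
  have := cW0 14 3
  norm_num at this
  rw [this]
  norm_num [cW_15_3_0, cW_15_3_1, cW_15_3_2]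

lemma cW_16_3_1 : (W 16 3 1).card = 13111 := by
  have := cW1 14 3 (by norm_num)
  norm_num at this
  rw [this]
  norm_num [cW_15_4_0, cW_15_4_1]

lemma cW_16_3_2 : (W 16 3 2).card = 17478 := by
  have := cW2 14 2
  norm_num at this
  rw [this]
  norm_num [cW_15_2_0, cW_15_2_2]

lemma cW_16_4_0 : (W 16 4 0).card = 21935 := by
  have := cW0 14 4
  norm_num at this
  rw [this]
  norm_num [cW_15_4_0, cW_15_4_1, cW_15_4_2]

lemma cW_16_4_1 : (W 16 4 1).card = 7028 := by
  have := cW1 14 4 (by norm_num)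
  norm_num at this
  rw [this]
  norm_num [cW_15_5_0, cW_15_5_1]

lemma cW_16_4_2 : (W 16 4 2).card = 19443 := by
  have := cW2 14 3
  norm_num at this
  rw [this]
  norm_num [cW_15_3_0, cW_15_3_2]

lemma cW_16_5_0 : (W 16 5 0).card = 15532 := by
  have := cW0 14 5
  norm_num at this
  rw [this]
  norm_num [cW_15_5_0, cW_15_5_1, cW_15_5_2]

lemma cW_16_5_1 : (W 16 5 1).card = 0 := by have := cW1' 14; norm_num at this ⊢; exact this

lemma cW_16_5_2 : (W 16 5 2).card = 18760 := by
  have := cW2 14 4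
  norm_num at this
  rw [this]
  norm_num [cW_15_4_0, cW_15_4_2]

lemma cW_17_0_0 : (W 17 0 0).card = 34235 := by
  have := cW0 15 0
  norm_num at this
  rw [this]
  norm_num [cW_16_0_0, cW_16_0_1, cW_16_0_2]

lemma cW_17_0_1 : (W 17 0 1).card = 41324 := by
  have := cW1 15 0 (by norm_num)
  norm_num at this
  rw [this]
  norm_num [cW_16_1_0, cW_16_1_1]

lemma cW_17_0_2 : (W 17 0 2).card = 0 := by have := cW2' 15; norm_num at this ⊢; exact this

lemma cW_17_1_0 : (W 17 1 0).card = 48361 := by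
  have := cW0 15 1
  norm_num at this
  rw [this]
  norm_num [cW_16_1_0, cW_16_1_1, cW_16_1_2]

lemma cW_17_1_1 : (W 17 1 1).card = 42809 := by
  have := cW1 15 1 (by norm_num)
  norm_num at this
  rw [this]
  norm_num [cW_16_2_0, cW_16_2_1]

lemma cW_17_1_2 : (W 17 1 2).card = 15513 := by
  have := cW2 15 0
  norm_num at this
  rw [this]
  norm_num [cW_16_0_0, cW_16_0_2]

lemma cW_17_2_0 : (W 17 2 0).card = 55949 := by
  have := cW0 15 2
  norm_num at this
  rw [this]
  norm_num [cW_16_2_0, cW_16_2_1, cW_16_2_2]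

lemma cW_17_2_1 : (W 17 2 1).card = 38485 := by
  have := cW1 15 2 (by norm_num)
  norm_num at this
  rw [this]
  norm_num [cW_16_3_0, cW_16_3_1]

lemma cW_17_2_2 : (W 17 2 2).card = 28960 := by
  have := cW2 15 1
  norm_num at this
  rw [this]
  norm_num [cW_16_1_0, cW_16_1_2]

lemma cW_17_3_0 : (W 17 3 0).card = 55963 := by
  have := cW0 15 3
  norm_num at this
  rw [this]
  norm_num [cW_16_3_0, cW_16_3_1, cW_16_3_2]

lemma cW_17_3_1 : (W 17 3 1).card = 28963 := by
  have := cW1 15 3 (by norm_num)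
  norm_num at this
  rw [this]
  norm_num [cW_16_4_0, cW_16_4_1]

lemma cW_17_3_2 : (W 17 3 2).card = 38513 := by
  have := cW2 15 2
  norm_num at this
  rw [this]
  norm_num [cW_16_2_0, cW_16_2_2]

lemma cW_17_4_0 : (W 17 4 0).card = 48406 := by
  have := cW0 15 4
  norm_num at this
  rw [this]
  norm_num [cW_16_4_0, cW_16_4_1, cW_16_4_2]

lemma cW_17_4_1 : (W 17 4 1).card = 15532 := by
  have := cW1 15 4 (by norm_num)
  norm_num at this
  rw [this]
  norm_num [cW_16_5_0, cW_16_5_1]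

lemma cW_17_4_2 : (W 17 4 2).card = 42852 := by
  have := cW2 15 3
  norm_num at this
  rw [this]
  norm_num [cW_16_3_0, cW_16_3_2]

lemma cW_17_5_0 : (W 17 5 0).card = 34292 := by
  have := cW0 15 5
  norm_num at this
  rw [this]
  norm_num [cW_16_5_0, cW_16_5_1, cW_16_5_2]

lemma cW_17_5_1 : (W 17 5 1).card = 0 := by have := cW1' 15; norm_num at this ⊢; exact this

lemma cW_17_5_2 : (W 17 5 2).card = 41378 := by
  have := cW2 15 4
  norm_num at this
  rw [this]
  norm_num [cW_16_4_0, cW_16_4_2]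

lemma cW_18_0_0 : (W 18 0 0).card = 75559 := by
  have := cW0 16 0
  norm_num at this
  rw [this]
  norm_num [cW_17_0_0, cW_17_0_1, cW_17_0_2]

lemma cW_18_0_1 : (W 18 0 1).card = 91170 := by
  have := cW1 16 0 (by norm_num)
  norm_num at this
  rw [this]
  norm_num [cW_17_1_0, cW_17_1_1]

lemma cW_18_0_2 : (W 18 0 2).card = 0 := by have := cW2' 16; norm_num at this ⊢; exact this

lemma cW_18_1_0 : (W 18 1 0).card = 106683 := by
  have := cW0 16 1
  norm_num at this
  rw [this]
  norm_num [cW_17_1_0, cW_17_1_1, cW_17_1_2]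

lemma cW_18_1_1 : (W 18 1 1).card = 94434 := by
  have := cW1 16 1 (by norm_num)
  norm_num at this
  rw [this]
  norm_num [cW_17_2_0, cW_17_2_1]

lemma cW_18_1_2 : (W 18 1 2).card = 34235 := by
  have := cW2 16 0
  norm_num at this
  rw [this]
  norm_num [cW_17_0_0, cW_17_0_2]

lemma cW_18_2_0 : (W 18 2 0).card = 123394 := by
  have := cW0 16 2
  norm_num at this
  rw [this]
  norm_num [cW_17_2_0, cW_17_2_1, cW_17_2_2]

lemma cW_18_2_1 : (W 18 2 1).card = 84926 := by
  have := cW1 16 2 (by norm_num)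
  norm_num at this
  rw [this]
  norm_num [cW_17_3_0, cW_17_3_1]

lemma cW_18_2_2 : (W 18 2 2).card = 63874 := by
  have := cW2 16 1
  norm_num at this
  rw [this]
  norm_num [cW_17_1_0, cW_17_1_2]

lemma cW_18_3_0 : (W 18 3 0).card = 123439 := by
  have := cW0 16 3
  norm_num at this
  rw [this]
  norm_num [cW_17_3_0, cW_17_3_1, cW_17_3_2]

lemma cW_18_3_1 : (W 18 3 1).card = 63938 := by
  have := cW1 16 3 (by norm_num)
  norm_num at this
  rw [this]
  norm_num [cW_17_4_0, cW_17_4_1]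

lemma cW_18_3_2 : (W 18 3 2).card = 84909 := by
  have := cW2 16 2
  norm_num at this
  rw [this]
  norm_num [cW_17_2_0, cW_17_2_2]

lemma cW_18_4_0 : (W 18 4 0).card = 106790 := by
  have := cW0 16 4
  norm_num at this
  rw [this]
  norm_num [cW_17_4_0, cW_17_4_1, cW_17_4_2]

lemma cW_18_4_1 : (W 18 4 1).card = 34292 := by
  have := cW1 16 4 (by norm_num)
  norm_num at this
  rw [this]
  norm_num [cW_17_5_0, cW_17_5_1]

lemma cW_18_4_2 : (W 18 4 2).card = 94476 := by
  have := cW2 16 3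
  norm_num at this
  rw [this]
  norm_num [cW_17_3_0, cW_17_3_2]

lemma cW_18_5_0 : (W 18 5 0).card = 75670 := by
  have := cW0 16 5
  norm_num at this
  rw [this]
  norm_num [cW_17_5_0, cW_17_5_1, cW_17_5_2]

lemma cW_18_5_1 : (W 18 5 1).card = 0 := by have := cW1' 16; norm_num at this ⊢; exact this

lemma cW_18_5_2 : (W 18 5 2).card = 91258 := by
  have := cW2 16 4
  norm_num at this
  rw [this]
  norm_num [cW_17_4_0, cW_17_4_2]

lemma cW_19_0_0 : (W 19 0 0).card = 166729 := by
  have := cW0 17 0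
  norm_num at this
  rw [this]
  norm_num [cW_18_0_0, cW_18_0_1, cW_18_0_2]

lemma cW_19_0_1 : (W 19 0 1).card = 201117 := by
  have := cW1 17 0 (by norm_num)
  norm_num at this
  rw [this]
  norm_num [cW_18_1_0, cW_18_1_1]

lemma cW_19_0_2 : (W 19 0 2).card = 0 := by have := cW2' 17; norm_num at this ⊢; exact this

lemma cW_19_1_0 : (W 19 1 0).card = 235352 := by
  have := cW0 17 1
  norm_num at this
  rw [this]
  norm_num [cW_18_1_0, cW_18_1_1, cW_18_1_2]

lemma cW_19_1_1 : (W 19 1 1).card = 208320 := by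
  have := cW1 17 1 (by norm_num)
  norm_num at this
  rw [this]
  norm_num [cW_18_2_0, cW_18_2_1]

lemma cW_19_1_2 : (W 19 1 2).card = 75559 := by
  have := cW2 17 0
  norm_num at this
  rw [this]
  norm_num [cW_18_0_0, cW_18_0_2]

lemma cW_19_2_0 : (W 19 2 0).card = 272194 := by
  have := cW0 17 2
  norm_num at this
  rw [this]
  norm_num [cW_18_2_0, cW_18_2_1, cW_18_2_2]

lemma cW_19_2_1 : (W 19 2 1).card = 187377 := by
  have := cW1 17 2 (by norm_num)
  norm_num at this
  rw [this]
  norm_num [cW_18_3_0, cW_18_3_1]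

lemma cW_19_2_2 : (W 19 2 2).card = 140918 := by
  have := cW2 17 1
  norm_num at this
  rw [this]
  norm_num [cW_18_1_0, cW_18_1_2]

lemma cW_19_3_0 : (W 19 3 0).card = 272286 := by
  have := cW0 17 3
  norm_num at this
  rw [this]
  norm_num [cW_18_3_0, cW_18_3_1, cW_18_3_2]

lemma cW_19_3_1 : (W 19 3 1).card = 141082 := by
  have := cW1 17 3 (by norm_num)
  norm_num at this
  rw [this]
  norm_num [cW_18_4_0, cW_18_4_1]

lemma cW_19_3_2 : (W 19 3 2).card = 187268 := by
  have := cW2 17 2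
  norm_num at this
  rw [this]
  norm_num [cW_18_2_0, cW_18_2_2]

lemma cW_19_4_0 : (W 19 4 0).card = 235558 := by
  have := cW0 17 4
  norm_num at this
  rw [this]
  norm_num [cW_18_4_0, cW_18_4_1, cW_18_4_2]

lemma cW_19_4_1 : (W 19 4 1).card = 75670 := by
  have := cW1 17 4 (by norm_num)
  norm_num at this
  rw [this]
  norm_num [cW_18_5_0, cW_18_5_1]

lemma cW_19_4_2 : (W 19 4 2).card = 208348 := by
  have := cW2 17 3
  norm_num at this
  rw [this]
  norm_num [cW_18_3_0, cW_18_3_2]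

lemma cW_19_5_0 : (W 19 5 0).card = 166928 := by
  have := cW0 17 5
  norm_num at this
  rw [this]
  norm_num [cW_18_5_0, cW_18_5_1, cW_18_5_2]

lemma cW_19_5_1 : (W 19 5 1).card = 0 := by have := cW1' 17; norm_num at this ⊢; exact this

lemma cW_19_5_2 : (W 19 5 2).card = 201266 := by
  have := cW2 17 4
  norm_num at this
  rw [this]
  norm_num [cW_18_4_0, cW_18_4_2]

lemma cW_20_0_0 : (W 20 0 0).card = 367846 := by
  have := cW0 18 0
  norm_num at this
  rw [this]
  norm_num [cW_19_0_0, cW_19_0_1, cW_19_0_2]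

lemma cW_20_0_1 : (W 20 0 1).card = 443672 := by
  have := cW1 18 0 (by norm_num)
  norm_num at this
  rw [this]
  norm_num [cW_19_1_0, cW_19_1_1]

lemma cW_20_0_2 : (W 20 0 2).card = 0 := by have := cW2' 18; norm_num at this ⊢; exact this

lemma cW_20_1_0 : (W 20 1 0).card = 519231 := by
  have := cW0 18 1
  norm_num at this
  rw [this]
  norm_num [cW_19_1_0, cW_19_1_1, cW_19_1_2]

lemma cW_20_1_1 : (W 20 1 1).card = 459571 := by
  have := cW1 18 1 (by norm_num)
  norm_num at this
  rw [this]
  norm_num [cW_19_2_0, cW_19_2_1]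

lemma cW_20_1_2 : (W 20 1 2).card = 166729 := by
  have := cW2 18 0
  norm_num at this
  rw [this]
  norm_num [cW_19_0_0, cW_19_0_2]

lemma cW_20_2_0 : (W 20 2 0).card = 600489 := by
  have := cW0 18 2
  norm_num at this
  rw [this]
  norm_num [cW_19_2_0, cW_19_2_1, cW_19_2_2]

lemma cW_20_2_1 : (W 20 2 1).card = 413368 := by
  have := cW1 18 2 (by norm_num)
  norm_num at this
  rw [this]
  norm_num [cW_19_3_0, cW_19_3_1]

lemma cW_20_2_2 : (W 20 2 2).card = 310911 := by
  have := cW2 18 1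
  norm_num at this
  rw [this]
  norm_num [cW_19_1_0, cW_19_1_2]

lemma cW_20_3_0 : (W 20 3 0).card = 600636 := by
  have := cW0 18 3
  norm_num at this
  rw [this]
  norm_num [cW_19_3_0, cW_19_3_1, cW_19_3_2]

lemma cW_20_3_1 : (W 20 3 1).card = 311228 := by
  have := cW1 18 3 (by norm_num)
  norm_num at this
  rw [this]
  norm_num [cW_19_4_0, cW_19_4_1]

lemma cW_20_3_2 : (W 20 3 2).card = 413112 := by
  have := cW2 18 2
  norm_num at this
  rw [this]
  norm_num [cW_19_2_0, cW_19_2_2]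

lemma cW_20_4_0 : (W 20 4 0).card = 519576 := by
  have := cW0 18 4
  norm_num at this
  rw [this]
  norm_num [cW_19_4_0, cW_19_4_1, cW_19_4_2]

lemma cW_20_4_1 : (W 20 4 1).card = 166928 := by
  have := cW1 18 4 (by norm_num)
  norm_num at this
  rw [this]
  norm_num [cW_19_5_0, cW_19_5_1]

lemma cW_20_4_2 : (W 20 4 2).card = 459554 := by
  have := cW2 18 3
  norm_num at this
  rw [this]
  norm_num [cW_19_3_0, cW_19_3_2]

lemma cW_20_5_0 : (W 20 5 0).card = 368194 := by
  have := cW0 18 5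
  norm_num at this
  rw [this]
  norm_num [cW_19_5_0, cW_19_5_1, cW_19_5_2]

lemma cW_20_5_1 : (W 20 5 1).card = 0 := by have := cW1' 18; norm_num at this ⊢; exact this

lemma cW_20_5_2 : (W 20 5 2).card = 443906 := by
  have := cW2 18 4
  norm_num at this
  rw [this]
  norm_num [cW_19_4_0, cW_19_4_2]

lemma cW_21_0_0 : (W 21 0 0).card = 811518 := by
  have := cW0 19 0
  norm_num at this
  rw [this]
  norm_num [cW_20_0_0, cW_20_0_1, cW_20_0_2]

lemma cW_21_0_1 : (W 21 0 1).card = 978802 := by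
  have := cW1 19 0 (by norm_num)
  norm_num at this
  rw [this]
  norm_num [cW_20_1_0, cW_20_1_1]

lemma cW_21_0_2 : (W 21 0 2).card = 0 := by have := cW2' 19; norm_num at this ⊢; exact this

lemma cW_21_1_0 : (W 21 1 0).card = 1145531 := by
  have := cW0 19 1
  norm_num at this
  rw [this]
  norm_num [cW_20_1_0, cW_20_1_1, cW_20_1_2]

lemma cW_21_1_1 : (W 21 1 1).card = 1013857 := by
  have := cW1 19 1 (by norm_num)
  norm_num at this
  rw [this]
  norm_num [cW_20_2_0, cW_20_2_1]

lemma cW_21_1_2 : (W 21 1 2).card = 367846 := by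
  have := cW2 19 0
  norm_num at this
  rw [this]
  norm_num [cW_20_0_0, cW_20_0_2]

lemma cW_21_2_0 : (W 21 2 0).card = 1324768 := by
  have := cW0 19 2
  norm_num at this
  rw [this]
  norm_num [cW_20_2_0, cW_20_2_1, cW_20_2_2]

lemma cW_21_2_1 : (W 21 2 1).card = 911864 := by
  have := cW1 19 2 (by norm_num)
  norm_num at this
  rw [this]
  norm_num [cW_20_3_0, cW_20_3_1]

lemma cW_21_2_2 : (W 21 2 2).card = 685960 := by
  have := cW2 19 1
  norm_num at this
  rw [this]
  norm_num [cW_20_1_0, cW_20_1_2]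

lemma cW_21_3_0 : (W 21 3 0).card = 1324976 := by
  have := cW0 19 3
  norm_num at this
  rw [this]
  norm_num [cW_20_3_0, cW_20_3_1, cW_20_3_2]

lemma cW_21_3_1 : (W 21 3 1).card = 686504 := by
  have := cW1 19 3 (by norm_num)
  norm_num at this
  rw [this]
  norm_num [cW_20_4_0, cW_20_4_1]

lemma cW_21_3_2 : (W 21 3 2).card = 911400 := by
  have := cW2 19 2
  norm_num at this
  rw [this]
  norm_num [cW_20_2_0, cW_20_2_2]

lemma cW_21_4_0 : (W 21 4 0).card = 1146058 := by
  have := cW0 19 4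
  norm_num at this
  rw [this]
  norm_num [cW_20_4_0, cW_20_4_1, cW_20_4_2]

lemma cW_21_4_1 : (W 21 4 1).card = 368194 := by
  have := cW1 19 4 (by norm_num)
  norm_num at this
  rw [this]
  norm_num [cW_20_5_0, cW_20_5_1]

lemma cW_21_4_2 : (W 21 4 2).card = 1013748 := by
  have := cW2 19 3
  norm_num at this
  rw [this]
  norm_num [cW_20_3_0, cW_20_3_2]

lemma cW_21_5_0 : (W 21 5 0).card = 812100 := by
  have := cW0 19 5
  norm_num at this
  rw [this]
  norm_num [cW_20_5_0, cW_20_5_1, cW_20_5_2]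

lemma cW_21_5_1 : (W 21 5 1).card = 0 := by have := cW1' 19; norm_num at this ⊢; exact this

lemma cW_21_5_2 : (W 21 5 2).card = 979130 := by
  have := cW2 19 4
  norm_num at this
  rw [this]
  norm_num [cW_20_4_0, cW_20_4_2]

lemma cW_22_0_0 : (W 22 0 0).card = 1790320 := by
  have := cW0 20 0
  norm_num at this
  rw [this]
  norm_num [cW_21_0_0, cW_21_0_1, cW_21_0_2]

lemma cW_22_0_1 : (W 22 0 1).card = 2159388 := by
  have := cW1 20 0 (by norm_num)
  norm_num at this
  rw [this]
  norm_num [cW_21_1_0, cW_21_1_1]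

lemma cW_22_0_2 : (W 22 0 2).card = 0 := by have := cW2' 20; norm_num at this ⊢; exact this

lemma cW_22_1_0 : (W 22 1 0).card = 2527234 := by
  have := cW0 20 1
  norm_num at this
  rw [this]
  norm_num [cW_21_1_0, cW_21_1_1, cW_21_1_2]

lemma cW_22_1_1 : (W 22 1 1).card = 2236632 := by
  have := cW1 20 1 (by norm_num)
  norm_num at this
  rw [this]
  norm_num [cW_21_2_0, cW_21_2_1]

lemma cW_22_1_2 : (W 22 1 2).card = 811518 := by
  have := cW2 20 0
  norm_num at this
  rw [this]
  norm_num [cW_21_0_0, cW_21_0_2]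

lemma cW_22_2_0 : (W 22 2 0).card = 2922592 := by
  have := cW0 20 2
  norm_num at this
  rw [this]
  norm_num [cW_21_2_0, cW_21_2_1, cW_21_2_2]

lemma cW_22_2_1 : (W 22 2 1).card = 2011480 := by
  have := cW1 20 2 (by norm_num)
  norm_num at this
  rw [this]
  norm_num [cW_21_3_0, cW_21_3_1]

lemma cW_22_2_2 : (W 22 2 2).card = 1513377 := by
  have := cW2 20 1
  norm_num at this
  rw [this]
  norm_num [cW_21_1_0, cW_21_1_2]

lemma cW_22_3_0 : (W 22 3 0).card = 2922880 := by
  have := cW0 20 3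
  norm_num at this
  rw [this]
  norm_num [cW_21_3_0, cW_21_3_1, cW_21_3_2]

lemma cW_22_3_1 : (W 22 3 1).card = 1514252 := by
  have := cW1 20 3 (by norm_num)
  norm_num at this
  rw [this]
  norm_num [cW_21_4_0, cW_21_4_1]

lemma cW_22_3_2 : (W 22 3 2).card = 2010728 := by
  have := cW2 20 2
  norm_num at this
  rw [this]
  norm_num [cW_21_2_0, cW_21_2_2]

lemma cW_22_4_0 : (W 22 4 0).card = 2528000 := by
  have := cW0 20 4
  norm_num at this
  rw [this]
  norm_num [cW_21_4_0, cW_21_4_1, cW_21_4_2]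

lemma cW_22_4_1 : (W 22 4 1).card = 812100 := by
  have := cW1 20 4 (by norm_num)
  norm_num at this
  rw [this]
  norm_num [cW_21_5_0, cW_21_5_1]

lemma cW_22_4_2 : (W 22 4 2).card = 2236376 := by
  have := cW2 20 3
  norm_num at this
  rw [this]
  norm_num [cW_21_3_0, cW_21_3_2]

lemma cW_22_5_0 : (W 22 5 0).card = 1791230 := by
  have := cW0 20 5
  norm_num at this
  rw [this]
  norm_num [cW_21_5_0, cW_21_5_1, cW_21_5_2]

lemma cW_22_5_1 : (W 22 5 1).card = 0 := by have := cW1' 20; norm_num at this ⊢; exact this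

lemma cW_22_5_2 : (W 22 5 2).card = 2159806 := by
  have := cW2 20 4
  norm_num at this
  rw [this]
  norm_num [cW_21_4_0, cW_21_4_2]

lemma cW_23_0_0 : (W 23 0 0).card = 3949708 := by
  have := cW0 21 0
  norm_num at this
  rw [this]
  norm_num [cW_22_0_0, cW_22_0_1, cW_22_0_2]

lemma cW_23_0_1 : (W 23 0 1).card = 4763866 := by
  have := cW1 21 0 (by norm_num)
  norm_num at this
  rw [this]
  norm_num [cW_22_1_0, cW_22_1_1]

lemma cW_23_0_2 : (W 23 0 2).card = 0 := by have := cW2' 21; norm_num at this ⊢; exact this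

lemma cW_23_1_0 : (W 23 1 0).card = 5575384 := by
  have := cW0 21 1
  norm_num at this
  rw [this]
  norm_num [cW_22_1_0, cW_22_1_1, cW_22_1_2]

lemma cW_23_1_1 : (W 23 1 1).card = 4934072 := by
  have := cW1 21 1 (by norm_num)
  norm_num at this
  rw [this]
  norm_num [cW_22_2_0, cW_22_2_1]

lemma cW_23_1_2 : (W 23 1 2).card = 1790320 := by
  have := cW2 21 0
  norm_num at this
  rw [this]
  norm_num [cW_22_0_0, cW_22_0_2]

lemma cW_23_2_0 : (W 23 2 0).card = 6447449 := by
  have := cW0 21 2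
  norm_num at this
  rw [this]
  norm_num [cW_22_2_0, cW_22_2_1, cW_22_2_2]

lemma cW_23_2_1 : (W 23 2 1).card = 4437132 := by
  have := cW1 21 2 (by norm_num)
  norm_num at this
  rw [this]
  norm_num [cW_22_3_0, cW_22_3_1]

lemma cW_23_2_2 : (W 23 2 2).card = 3338752 := by
  have := cW2 21 1
  norm_num at this
  rw [this]
  norm_num [cW_22_1_0, cW_22_1_2]

lemma cW_23_3_0 : (W 23 3 0).card = 6447860 := by
  have := cW0 21 3
  norm_num at this
  rw [this]
  norm_num [cW_22_3_0, cW_22_3_1, cW_22_3_2]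

lemma cW_23_3_1 : (W 23 3 1).card = 3340100 := by
  have := cW1 21 3 (by norm_num)
  norm_num at this
  rw [this]
  norm_num [cW_22_4_0, cW_22_4_1]

lemma cW_23_3_2 : (W 23 3 2).card = 4435969 := by
  have := cW2 21 2
  norm_num at this
  rw [this]
  norm_num [cW_22_2_0, cW_22_2_2]

lemma cW_23_4_0 : (W 23 4 0).card = 5576476 := by
  have := cW0 21 4
  norm_num at this
  rw [this]
  norm_num [cW_22_4_0, cW_22_4_1, cW_22_4_2]

lemma cW_23_4_1 : (W 23 4 1).card = 1791230 := by
  have := cW1 21 4 (by norm_num)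
  norm_num at this
  rw [this]
  norm_num [cW_22_5_0, cW_22_5_1]

lemma cW_23_4_2 : (W 23 4 2).card = 4933608 := by
  have := cW2 21 3
  norm_num at this
  rw [this]
  norm_num [cW_22_3_0, cW_22_3_2]

lemma cW_23_5_0 : (W 23 5 0).card = 3951036 := by
  have := cW0 21 5
  norm_num at this
  rw [this]
  norm_num [cW_22_5_0, cW_22_5_1, cW_22_5_2]

lemma cW_23_5_1 : (W 23 5 1).card = 0 := by have := cW1' 21; norm_num at this ⊢; exact this

lemma cW_23_5_2 : (W 23 5 2).card = 4764376 := by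
  have := cW2 21 4
  norm_num at this
  rw [this]
  norm_num [cW_22_4_0, cW_22_4_2]

lemma cW_24_0_0 : (W 24 0 0).card = 8713574 := by
  have := cW0 22 0
  norm_num at this
  rw [this]
  norm_num [cW_23_0_0, cW_23_0_1, cW_23_0_2]

lemma cW_24_0_1 : (W 24 0 1).card = 10509456 := by
  have := cW1 22 0 (by norm_num)
  norm_num at this
  rw [this]
  norm_num [cW_23_1_0, cW_23_1_1]

lemma cW_24_0_2 : (W 24 0 2).card = 0 := by have := cW2' 22; norm_num at this ⊢; exact this

lemma cW_24_1_0 : (W 24 1 0).card = 12299776 := by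
  have := cW0 22 1
  norm_num at this
  rw [this]
  norm_num [cW_23_1_0, cW_23_1_1, cW_23_1_2]

lemma cW_24_1_1 : (W 24 1 1).card = 10884581 := by
  have := cW1 22 1 (by norm_num)
  norm_num at this
  rw [this]
  norm_num [cW_23_2_0, cW_23_2_1]

lemma cW_24_1_2 : (W 24 1 2).card = 3949708 := by
  have := cW2 22 0
  norm_num at this
  rw [this]
  norm_num [cW_23_0_0, cW_23_0_2]

lemma cW_24_2_0 : (W 24 2 0).card = 14223333 := by
  have := cW0 22 2
  norm_num at this
  rw [this]
  norm_num [cW_23_2_0, cW_23_2_1, cW_23_2_2]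

lemma cW_24_2_1 : (W 24 2 1).card = 9787960 := by
  have := cW1 22 2 (by norm_num)
  norm_num at this
  rw [this]
  norm_num [cW_23_3_0, cW_23_3_1]

lemma cW_24_2_2 : (W 24 2 2).card = 7365704 := by
  have := cW2 22 1
  norm_num at this
  rw [this]
  norm_num [cW_23_1_0, cW_23_1_2]

lemma cW_24_3_0 : (W 24 3 0).card = 14223929 := by
  have := cW0 22 3
  norm_num at this
  rw [this]
  norm_num [cW_23_3_0, cW_23_3_1, cW_23_3_2]

lemma cW_24_3_1 : (W 24 3 1).card = 7367706 := by
  have := cW1 22 3 (by norm_num)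
  norm_num at this
  rw [this]
  norm_num [cW_23_4_0, cW_23_4_1]

lemma cW_24_3_2 : (W 24 3 2).card = 9786201 := by
  have := cW2 22 2
  norm_num at this
  rw [this]
  norm_num [cW_23_2_0, cW_23_2_2]

lemma cW_24_4_0 : (W 24 4 0).card = 12301314 := by
  have := cW0 22 4
  norm_num at this
  rw [this]
  norm_num [cW_23_4_0, cW_23_4_1, cW_23_4_2]

lemma cW_24_4_1 : (W 24 4 1).card = 3951036 := by
  have := cW1 22 4 (by norm_num)
  norm_num at this
  rw [this]
  norm_num [cW_23_5_0, cW_23_5_1]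

lemma cW_24_4_2 : (W 24 4 2).card = 10883829 := by
  have := cW2 22 3
  norm_num at this
  rw [this]
  norm_num [cW_23_3_0, cW_23_3_2]

lemma cW_24_5_0 : (W 24 5 0).card = 8715412 := by
  have := cW0 22 5
  norm_num at this
  rw [this]
  norm_num [cW_23_5_0, cW_23_5_1, cW_23_5_2]

lemma cW_24_5_1 : (W 24 5 1).card = 0 := by have := cW1' 22; norm_num at this ⊢; exact this

lemma cW_24_5_2 : (W 24 5 2).card = 10510084 := by
  have := cW2 22 4
  norm_num at this
  rw [this]
  norm_num [cW_23_4_0, cW_23_4_2]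

lemma cW_25_0_0 : (W 25 0 0).card = 19223030 := by
  have := cW0 23 0
  norm_num at this
  rw [this]
  norm_num [cW_24_0_0, cW_24_0_1, cW_24_0_2]

lemma cW_25_0_1 : (W 25 0 1).card = 23184357 := by
  have := cW1 23 0 (by norm_num)
  norm_num at this
  rw [this]
  norm_num [cW_24_1_0, cW_24_1_1]

lemma cW_25_0_2 : (W 25 0 2).card = 0 := by have := cW2' 23; norm_num at this ⊢; exact this

lemma cW_25_1_0 : (W 25 1 0).card = 27134065 := by
  have := cW0 23 1
  norm_num at this
  rw [this]
  norm_num [cW_24_1_0, cW_24_1_1, cW_24_1_2]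

lemma cW_25_1_1 : (W 25 1 1).card = 24011293 := by
  have := cW1 23 1 (by norm_num)
  norm_num at this
  rw [this]
  norm_num [cW_24_2_0, cW_24_2_1]

lemma cW_25_1_2 : (W 25 1 2).card = 8713574 := by
  have := cW2 23 0
  norm_num at this
  rw [this]
  norm_num [cW_24_0_0, cW_24_0_2]

lemma cW_25_2_0 : (W 25 2 0).card = 31376997 := by
  have := cW0 23 2
  norm_num at this
  rw [this]
  norm_num [cW_24_2_0, cW_24_2_1, cW_24_2_2]

lemma cW_25_2_1 : (W 25 2 1).card = 21591635 := by
  have := cW1 23 2 (by norm_num)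
  norm_num at this
  rw [this]
  norm_num [cW_24_3_0, cW_24_3_1]

lemma cW_25_2_2 : (W 25 2 2).card = 16249484 := by
  have := cW2 23 1
  norm_num at this
  rw [this]
  norm_num [cW_24_1_0, cW_24_1_2]

lemma cW_25_3_0 : (W 25 3 0).card = 31377836 := by
  have := cW0 23 3
  norm_num at this
  rw [this]
  norm_num [cW_24_3_0, cW_24_3_1, cW_24_3_2]

lemma cW_25_3_1 : (W 25 3 1).card = 16252350 := by
  have := cW1 23 3 (by norm_num)
  norm_num at this
  rw [this]
  norm_num [cW_24_4_0, cW_24_4_1]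

lemma cW_25_3_2 : (W 25 3 2).card = 21589037 := by
  have := cW2 23 2
  norm_num at this
  rw [this]
  norm_num [cW_24_2_0, cW_24_2_2]

lemma cW_25_4_0 : (W 25 4 0).card = 27136179 := by
  have := cW0 23 4
  norm_num at this
  rw [this]
  norm_num [cW_24_4_0, cW_24_4_1, cW_24_4_2]

lemma cW_25_4_1 : (W 25 4 1).card = 8715412 := by
  have := cW1 23 4 (by norm_num)
  norm_num at this
  rw [this]
  norm_num [cW_24_5_0, cW_24_5_1]

lemma cW_25_4_2 : (W 25 4 2).card = 24010130 := by
  have := cW2 23 3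
  norm_num at this
  rw [this]
  norm_num [cW_24_3_0, cW_24_3_2]

lemma cW_25_5_0 : (W 25 5 0).card = 19225496 := by
  have := cW0 23 5
  norm_num at this
  rw [this]
  norm_num [cW_24_5_0, cW_24_5_1, cW_24_5_2]

lemma cW_25_5_1 : (W 25 5 1).card = 0 := by have := cW1' 23; norm_num at this ⊢; exact this

lemma cW_25_5_2 : (W 25 5 2).card = 23185143 := by
  have := cW2 23 4
  norm_num at this
  rw [this]
  norm_num [cW_24_4_0, cW_24_4_2]

lemma cW_26_0_0 : (W 26 0 0).card = 42407387 := by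
  have := cW0 24 0
  norm_num at this
  rw [this]
  norm_num [cW_25_0_0, cW_25_0_1, cW_25_0_2]

lemma cW_26_0_1 : (W 26 0 1).card = 51145358 := by
  have := cW1 24 0 (by norm_num)
  norm_num at this
  rw [this]
  norm_num [cW_25_1_0, cW_25_1_1]

lemma cW_26_0_2 : (W 26 0 2).card = 0 := by have := cW2' 24; norm_num at this ⊢; exact this

lemma cW_26_1_0 : (W 26 1 0).card = 59858932 := by
  have := cW0 24 1
  norm_num at this
  rw [this]
  norm_num [cW_25_1_0, cW_25_1_1, cW_25_1_2]

lemma cW_26_1_1 : (W 26 1 1).card = 52968632 := by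
  have := cW1 24 1 (by norm_num)
  norm_num at this
  rw [this]
  norm_num [cW_25_2_0, cW_25_2_1]

lemma cW_26_1_2 : (W 26 1 2).card = 19223030 := by
  have := cW2 24 0
  norm_num at this
  rw [this]
  norm_num [cW_25_0_0, cW_25_0_2]

lemma cW_26_2_0 : (W 26 2 0).card = 69218116 := by
  have := cW0 24 2
  norm_num at this
  rw [this]
  norm_num [cW_25_2_0, cW_25_2_1, cW_25_2_2]

lemma cW_26_2_1 : (W 26 2 1).card = 47630186 := by
  have := cW1 24 2 (by norm_num)
  norm_num at this
  rw [this]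
  norm_num [cW_25_3_0, cW_25_3_1]

lemma cW_26_2_2 : (W 26 2 2).card = 35847639 := by
  have := cW2 24 1
  norm_num at this
  rw [this]
  norm_num [cW_25_1_0, cW_25_1_2]

lemma cW_26_3_0 : (W 26 3 0).card = 69219223 := by
  have := cW0 24 3
  norm_num at this
  rw [this]
  norm_num [cW_25_3_0, cW_25_3_1, cW_25_3_2]

lemma cW_26_3_1 : (W 26 3 1).card = 35851591 := by
  have := cW1 24 3 (by norm_num)
  norm_num at this
  rw [this]
  norm_num [cW_25_4_0, cW_25_4_1]

lemma cW_26_3_2 : (W 26 3 2).card = 47626481 := by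
  have := cW2 24 2
  norm_num at this
  rw [this]
  norm_num [cW_25_2_0, cW_25_2_2]

lemma cW_26_4_0 : (W 26 4 0).card = 59861721 := by
  have := cW0 24 4
  norm_num at this
  rw [this]
  norm_num [cW_25_4_0, cW_25_4_1, cW_25_4_2]

lemma cW_26_4_1 : (W 26 4 1).card = 19225496 := by
  have := cW1 24 4 (by norm_num)
  norm_num at this
  rw [this]
  norm_num [cW_25_5_0, cW_25_5_1]

lemma cW_26_4_2 : (W 26 4 2).card = 52966873 := by
  have := cW2 24 3
  norm_num at this
  rw [this]
  norm_num [cW_25_3_0, cW_25_3_2]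

lemma cW_26_5_0 : (W 26 5 0).card = 42410639 := by
  have := cW0 24 5
  norm_num at this
  rw [this]
  norm_num [cW_25_5_0, cW_25_5_1, cW_25_5_2]

lemma cW_26_5_1 : (W 26 5 1).card = 0 := by have := cW1' 24; norm_num at this ⊢; exact this

lemma cW_26_5_2 : (W 26 5 2).card = 51146309 := by
  have := cW2 24 4
  norm_num at this
  rw [this]
  norm_num [cW_25_4_0, cW_25_4_2]

lemma cW_27_0_0 : (W 27 0 0).card = 93552745 := by
  have := cW0 25 0
  norm_num at this
  rw [this]
  norm_num [cW_26_0_0, cW_26_0_1, cW_26_0_2]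

lemma cW_27_0_1 : (W 27 0 1).card = 112827564 := by
  have := cW1 25 0 (by norm_num)
  norm_num at this
  rw [this]
  norm_num [cW_26_1_0, cW_26_1_1]

lemma cW_27_0_2 : (W 27 0 2).card = 0 := by have := cW2' 25; norm_num at this ⊢; exact this

lemma cW_27_1_0 : (W 27 1 0).card = 132050594 := by
  have := cW0 25 1
  norm_num at this
  rw [this]
  norm_num [cW_26_1_0, cW_26_1_1, cW_26_1_2]

lemma cW_27_1_1 : (W 27 1 1).card = 116848302 := by
  have := cW1 25 1 (by norm_num)
  norm_num at this
  rw [this]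
  norm_num [cW_26_2_0, cW_26_2_1]

lemma cW_27_1_2 : (W 27 1 2).card = 42407387 := by
  have := cW2 25 0
  norm_num at this
  rw [this]
  norm_num [cW_26_0_0, cW_26_0_2]

lemma cW_27_2_0 : (W 27 2 0).card = 152695941 := by
  have := cW0 25 2
  norm_num at this
  rw [this]
  norm_num [cW_26_2_0, cW_26_2_1, cW_26_2_2]

lemma cW_27_2_1 : (W 27 2 1).card = 105070814 := by
  have := cW1 25 2 (by norm_num)
  norm_num at this
  rw [this]
  norm_num [cW_26_3_0, cW_26_3_1]

lemma cW_27_2_2 : (W 27 2 2).card = 79081962 := by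
  have := cW2 25 1
  norm_num at this
  rw [this]
  norm_num [cW_26_1_0, cW_26_1_2]

lemma cW_27_3_0 : (W 27 3 0).card = 152697295 := by
  have := cW0 25 3
  norm_num at this
  rw [this]
  norm_num [cW_26_3_0, cW_26_3_1, cW_26_3_2]

lemma cW_27_3_1 : (W 27 3 1).card = 79087217 := by
  have := cW1 25 3 (by norm_num)
  norm_num at this
  rw [this]
  norm_num [cW_26_4_0, cW_26_4_1]

lemma cW_27_3_2 : (W 27 3 2).card = 105065755 := by
  have := cW2 25 2
  norm_num at this
  rw [this]
  norm_num [cW_26_2_0, cW_26_2_2]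

lemma cW_27_4_0 : (W 27 4 0).card = 132054090 := by
  have := cW0 25 4
  norm_num at this
  rw [this]
  norm_num [cW_26_4_0, cW_26_4_1, cW_26_4_2]

lemma cW_27_4_1 : (W 27 4 1).card = 42410639 := by
  have := cW1 25 4 (by norm_num)
  norm_num at this
  rw [this]
  norm_num [cW_26_5_0, cW_26_5_1]

lemma cW_27_4_2 : (W 27 4 2).card = 116845704 := by
  have := cW2 25 3
  norm_num at this
  rw [this]
  norm_num [cW_26_3_0, cW_26_3_2]

lemma cW_27_5_0 : (W 27 5 0).card = 93556948 := by
  have := cW0 25 5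
  norm_num at this
  rw [this]
  norm_num [cW_26_5_0, cW_26_5_1, cW_26_5_2]

lemma cW_27_5_1 : (W 27 5 1).card = 0 := by have := cW1' 25; norm_num at this ⊢; exact this

lemma cW_27_5_2 : (W 27 5 2).card = 112828594 := by
  have := cW2 25 4
  norm_num at this
  rw [this]
  norm_num [cW_26_4_0, cW_26_4_2]

lemma cW_28_0_0 : (W 28 0 0).card = 206380309 := by
  have := cW0 26 0
  norm_num at this
  rw [this]
  norm_num [cW_27_0_0, cW_27_0_1, cW_27_0_2]

lemma cW_28_0_1 : (W 28 0 1).card = 248898896 := by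
  have := cW1 26 0 (by norm_num)
  norm_num at this
  rw [this]
  norm_num [cW_27_1_0, cW_27_1_1]

lemma cW_28_0_2 : (W 28 0 2).card = 0 := by have := cW2' 26; norm_num at this ⊢; exact this

lemma cW_28_1_0 : (W 28 1 0).card = 291306283 := by
  have := cW0 26 1
  norm_num at this
  rw [this]
  norm_num [cW_27_1_0, cW_27_1_1, cW_27_1_2]

lemma cW_28_1_1 : (W 28 1 1).card = 257766755 := by
  have := cW1 26 1 (by norm_num)
  norm_num at this
  rw [this]
  norm_num [cW_27_2_0, cW_27_2_1]

lemma cW_28_1_2 : (W 28 1 2).card = 93552745 := by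
  have := cW2 26 0
  norm_num at this
  rw [this]
  norm_num [cW_27_0_0, cW_27_0_2]

lemma cW_28_2_0 : (W 28 2 0).card = 336848717 := by
  have := cW0 26 2
  norm_num at this
  rw [this]
  norm_num [cW_27_2_0, cW_27_2_1, cW_27_2_2]

lemma cW_28_2_1 : (W 28 2 1).card = 231784512 := by
  have := cW1 26 2 (by norm_num)
  norm_num at this
  rw [this]
  norm_num [cW_27_3_0, cW_27_3_1]

lemma cW_28_2_2 : (W 28 2 2).card = 174457981 := by
  have := cW2 26 1
  norm_num at this
  rw [this]
  norm_num [cW_27_1_0, cW_27_1_2]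

lemma cW_28_3_0 : (W 28 3 0).card = 336850267 := by
  have := cW0 26 3
  norm_num at this
  rw [this]
  norm_num [cW_27_3_0, cW_27_3_1, cW_27_3_2]

lemma cW_28_3_1 : (W 28 3 1).card = 174464729 := by
  have := cW1 26 3 (by norm_num)
  norm_num at this
  rw [this]
  norm_num [cW_27_4_0, cW_27_4_1]

lemma cW_28_3_2 : (W 28 3 2).card = 231777903 := by
  have := cW2 26 2
  norm_num at this
  rw [this]
  norm_num [cW_27_2_0, cW_27_2_2]

lemma cW_28_4_0 : (W 28 4 0).card = 291310433 := by
  have := cW0 26 4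
  norm_num at this
  rw [this]
  norm_num [cW_27_4_0, cW_27_4_1, cW_27_4_2]

lemma cW_28_4_1 : (W 28 4 1).card = 93556948 := by
  have := cW1 26 4 (by norm_num)
  norm_num at this
  rw [this]
  norm_num [cW_27_5_0, cW_27_5_1]

lemma cW_28_4_2 : (W 28 4 2).card = 257763050 := by
  have := cW2 26 3
  norm_num at this
  rw [this]
  norm_num [cW_27_3_0, cW_27_3_2]

lemma cW_28_5_0 : (W 28 5 0).card = 206385542 := by
  have := cW0 26 5
  norm_num at this
  rw [this]
  norm_num [cW_27_5_0, cW_27_5_1, cW_27_5_2]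

lemma cW_28_5_1 : (W 28 5 1).card = 0 := by have := cW1' 26; norm_num at this ⊢; exact this

lemma cW_28_5_2 : (W 28 5 2).card = 248899794 := by
  have := cW2 26 4
  norm_num at this
  rw [this]
  norm_num [cW_27_4_0, cW_27_4_2]

lemma cW_29_0_0 : (W 29 0 0).card = 455279205 := by
  have := cW0 27 0
  norm_num at this
  rw [this]
  norm_num [cW_28_0_0, cW_28_0_1, cW_28_0_2]

lemma cW_29_0_1 : (W 29 0 1).card = 549073038 := by
  have := cW1 27 0 (by norm_num)
  norm_num at this
  rw [this]
  norm_num [cW_28_1_0, cW_28_1_1]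

lemma cW_29_0_2 : (W 29 0 2).card = 0 := by have := cW2' 27; norm_num at this ⊢; exact this

lemma cW_29_1_0 : (W 29 1 0).card = 642625783 := by
  have := cW0 27 1
  norm_num at this
  rw [this]
  norm_num [cW_28_1_0, cW_28_1_1, cW_28_1_2]

lemma cW_29_1_1 : (W 29 1 1).card = 568633229 := by
  have := cW1 27 1 (by norm_num)
  norm_num at this
  rw [this]
  norm_num [cW_28_2_0, cW_28_2_1]

lemma cW_29_1_2 : (W 29 1 2).card = 206380309 := by
  have := cW2 27 0
  norm_num at this
  rw [this]
  norm_num [cW_28_0_0, cW_28_0_2]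

lemma cW_29_2_0 : (W 29 2 0).card = 743091210 := by
  have := cW0 27 2
  norm_num at this
  rw [this]
  norm_num [cW_28_2_0, cW_28_2_1, cW_28_2_2]

lemma cW_29_2_1 : (W 29 2 1).card = 511314996 := by
  have := cW1 27 2 (by norm_num)
  norm_num at this
  rw [this]
  norm_num [cW_28_3_0, cW_28_3_1]

lemma cW_29_2_2 : (W 29 2 2).card = 384859028 := by
  have := cW2 27 1
  norm_num at this
  rw [this]
  norm_num [cW_28_1_0, cW_28_1_2]

lemma cW_29_3_0 : (W 29 3 0).card = 743092899 := by
  have := cW0 27 3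
  norm_num at this
  rw [this]
  norm_num [cW_28_3_0, cW_28_3_1, cW_28_3_2]

lemma cW_29_3_1 : (W 29 3 1).card = 384867381 := by
  have := cW1 27 3 (by norm_num)
  norm_num at this
  rw [this]
  norm_num [cW_28_4_0, cW_28_4_1]

lemma cW_29_3_2 : (W 29 3 2).card = 511306698 := by
  have := cW2 27 2
  norm_num at this
  rw [this]
  norm_num [cW_28_2_0, cW_28_2_2]

lemma cW_29_4_0 : (W 29 4 0).card = 642630431 := by
  have := cW0 27 4
  norm_num at this
  rw [this]
  norm_num [cW_28_4_0, cW_28_4_1, cW_28_4_2]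

lemma cW_29_4_1 : (W 29 4 1).card = 206385542 := by
  have := cW1 27 4 (by norm_num)
  norm_num at this
  rw [this]
  norm_num [cW_28_5_0, cW_28_5_1]

lemma cW_29_4_2 : (W 29 4 2).card = 568628170 := by
  have := cW2 27 3
  norm_num at this
  rw [this]
  norm_num [cW_28_3_0, cW_28_3_2]

lemma cW_29_5_0 : (W 29 5 0).card = 455285336 := by
  have := cW0 27 5
  norm_num at this
  rw [this]
  norm_num [cW_28_5_0, cW_28_5_1, cW_28_5_2]

lemma cW_29_5_1 : (W 29 5 1).card = 0 := by have := cW1' 27; norm_num at this ⊢; exact this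

lemma cW_29_5_2 : (W 29 5 2).card = 549073483 := by
  have := cW2 27 4
  norm_num at this
  rw [this]
  norm_num [cW_28_4_0, cW_28_4_2]

lemma cW_30_0_0 : (W 30 0 0).card = 1004352243 := by
  have := cW0 28 0
  norm_num at this
  rw [this]
  norm_num [cW_29_0_0, cW_29_0_1, cW_29_0_2]

lemma cW_30_0_1 : (W 30 0 1).card = 1211259012 := by
  have := cW1 28 0 (by norm_num)
  norm_num at this
  rw [this]
  norm_num [cW_29_1_0, cW_29_1_1]

lemma cW_30_0_2 : (W 30 0 2).card = 0 := by have := cW2' 28; norm_num at this ⊢; exact this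

lemma cW_30_1_0 : (W 30 1 0).card = 1417639321 := by
  have := cW0 28 1
  norm_num at this
  rw [this]
  norm_num [cW_29_1_0, cW_29_1_1, cW_29_1_2]

lemma cW_30_1_1 : (W 30 1 1).card = 1254406206 := by
  have := cW1 28 1 (by norm_num)
  norm_num at this
  rw [this]
  norm_num [cW_29_2_0, cW_29_2_1]

lemma cW_30_1_2 : (W 30 1 2).card = 455279205 := by
  have := cW2 28 0
  norm_num at this
  rw [this]
  norm_num [cW_29_0_0, cW_29_0_2]

lemma cW_30_2_0 : (W 30 2 0).card = 1639265234 := by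
  have := cW0 28 2
  norm_num at this
  rw [this]
  norm_num [cW_29_2_0, cW_29_2_1, cW_29_2_2]

lemma cW_30_2_1 : (W 30 2 1).card = 1127960280 := by
  have := cW1 28 2 (by norm_num)
  norm_num at this
  rw [this]
  norm_num [cW_29_3_0, cW_29_3_1]

lemma cW_30_2_2 : (W 30 2 2).card = 849006092 := by
  have := cW2 28 1
  norm_num at this
  rw [this]
  norm_num [cW_29_1_0, cW_29_1_2]

lemma cW_30_3_0 : (W 30 3 0).card = 1639266978 := by
  have := cW0 28 3
  norm_num at this
  rw [this]
  norm_num [cW_29_3_0, cW_29_3_1, cW_29_3_2]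

lemma cW_30_3_1 : (W 30 3 1).card = 849015973 := by
  have := cW1 28 3 (by norm_num)
  norm_num at this
  rw [this]
  norm_num [cW_29_4_0, cW_29_4_1]

lemma cW_30_3_2 : (W 30 3 2).card = 1127950238 := by
  have := cW2 28 2
  norm_num at this
  rw [this]
  norm_num [cW_29_2_0, cW_29_2_2]

lemma cW_30_4_0 : (W 30 4 0).card = 1417644143 := by
  have := cW0 28 4
  norm_num at this
  rw [this]
  norm_num [cW_29_4_0, cW_29_4_1, cW_29_4_2]

lemma cW_30_4_1 : (W 30 4 1).card = 455285336 := by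
  have := cW1 28 4 (by norm_num)
  norm_num at this
  rw [this]
  norm_num [cW_29_5_0, cW_29_5_1]

lemma cW_30_4_2 : (W 30 4 2).card = 1254399597 := by
  have := cW2 28 3
  norm_num at this
  rw [this]
  norm_num [cW_29_3_0, cW_29_3_2]

lemma cW_30_5_0 : (W 30 5 0).card = 1004358819 := by
  have := cW0 28 5
  norm_num at this
  rw [this]
  norm_num [cW_29_5_0, cW_29_5_1, cW_29_5_2]

lemma cW_30_5_1 : (W 30 5 1).card = 0 := by have := cW1' 28; norm_num at this ⊢; exact this

lemma cW_30_5_2 : (W 30 5 2).card = 1211258601 := by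
  have := cW2 28 4
  norm_num at this
  rw [this]
  norm_num [cW_29_4_0, cW_29_4_2]

lemma keySum : (1:ℝ) < ∑ t ∈ Finset.range 30,
    (1/2)^(t+1) * ((W (t+1) 0 0).card : ℝ) * (163/200)^(t+1) := by
  simp only [Finset.sum_range_succ, Finset.sum_range_zero]
  norm_num [cW_1_0_0, cW_2_0_0, cW_3_0_0, cW_4_0_0, cW_5_0_0, cW_6_0_0, cW_7_0_0, cW_8_0_0, cW_9_0_0, cW_10_0_0, cW_11_0_0, cW_12_0_0, cW_13_0_0, cW_14_0_0, cW_15_0_0, cW_16_0_0, cW_17_0_0, cW_18_0_0, cW_19_0_0, cW_20_0_0, cW_21_0_0, cW_22_0_0, cW_23_0_0, cW_24_0_0, cW_25_0_0, cW_26_0_0, cW_27_0_0, cW_28_0_0, cW_29_0_0, cW_30_0_0]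

noncomputable def excTerm (lam : ℝ) (t : ℕ) : ℝ :=
  (1 / 2 : ℝ) ^ (t + 1) * Nat.card ↥(excSet (t + 1)) * Real.exp (-lam * (t + 1))

/-- **Exponential tail of `K*`:** if `λ* > 0` satisfies `Σ_{t≥1} 2^{−t}|I_t| e^{−λ* t} = 1`,
then `K*(n) := 2^{−n}|I_n| e^{−λ* n}` has an exponential tail: there are `c₁, c₂ > 0` with
`K*(n) ≤ c₁ e^{−c₂ n}` for every `n ≥ 1`. -/
theorem K_star_exponential_tail (lam : ℝ) (hlam : 0 < lam)
    (hsum : ∑' t : ℕ, (1 / 2 : ℝ) ^ (t + 1) * Nat.card ↥(excSet (t + 1)) *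
      Real.exp (-lam * (t + 1)) = 1) :
    ∃ c₁ c₂ : ℝ, 0 < c₁ ∧ 0 < c₂ ∧ ∀ n : ℕ, 1 ≤ n →
      (1 / 2 : ℝ) ^ n * Nat.card ↥(excSet n) * Real.exp (-lam * n) ≤
        c₁ * Real.exp (-c₂ * n) := by
  have hexp : ∀ n : ℕ, Real.exp (-lam * (n + 1)) = Real.exp (-lam) ^ (n + 1) := by
    intro n
    have h : -lam * ((n : ℝ) + 1) = ((n + 1 : ℕ) : ℝ) * (-lam) := by push_cast; ring
    rw [h, Real.exp_nat_mul]
  set y := Real.exp (-lam) with hy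
  have hy0 : 0 < y := Real.exp_pos _
  have hsummable : Summable (excTerm lam) := by
    by_contra h
    have h0 := tsum_eq_zero_of_not_summable h
    have h1 : ∑' t : ℕ, excTerm lam t = 1 := hsum
    rw [h0] at h1
    norm_num at h1
  have hpos : ∀ t : ℕ, 0 ≤ excTerm lam t := by
    intro t
    unfold excTerm
    positivity
  -- Step 1 : y < 163/200
  have hylt : y < 163/200 := by
    by_contra hge
    push_neg at hge
    have hpart : ∑ t ∈ Finset.range 30, excTerm lam t ≤ 1 := by
      have h1 : ∑' t : ℕ, excTerm lam t = 1 := hsum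
      rw [← h1]
      exact Summable.sum_le_tsum (Finset.range 30) (fun i _ => hpos i) hsummable
    have hlow : ∑ t ∈ Finset.range 30,
        (1/2:ℝ)^(t+1) * ((W (t+1) 0 0).card : ℝ) * (163/200)^(t+1) ≤
        ∑ t ∈ Finset.range 30, excTerm lam t := by
      apply Finset.sum_le_sum
      intro i _
      unfold excTerm
      rw [hexp i]
      have hc : ((W (i+1) 0 0).card : ℝ) ≤ (Nat.card ↥(excSet (i+1)) : ℝ) := by
        exact_mod_cast lower_card i
      have hyp : (163/200:ℝ)^(i+1) ≤ y^(i+1) :=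
        pow_le_pow_left₀ (by norm_num) hge _
      exact mul_le_mul (mul_le_mul_of_nonneg_left hc (by positivity)) hyp
        (by positivity) (by positivity)
    linarith [keySum]
  -- Step 2 : conclusion
  refine ⟨2, Real.log (80000/78729), by norm_num, Real.log_pos (by norm_num), ?_⟩
  intro n hn
  obtain ⟨m, rfl⟩ : ∃ m, n = m + 1 := ⟨n - 1, by omega⟩
  have hrhs : (2:ℝ) * Real.exp (-(Real.log (80000/78729)) * ((m : ℝ) + 1)) =
      2 * (78729/80000 : ℝ)^(m+1) := by
    congr 1
    rw [show -(Real.log (80000/78729)) = Real.log (78729/80000 : ℝ) by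
      rw [← Real.log_inv]; norm_num]
    rw [show Real.log (78729/80000 : ℝ) * ((m : ℝ) + 1)
        = ((m + 1 : ℕ) : ℝ) * Real.log (78729/80000 : ℝ) by push_cast; ring]
    rw [Real.exp_nat_mul, Real.exp_log (by norm_num)]
  push_cast
  rw [hexp m, hrhs]
  have h1 : (Nat.card ↥(excSet (m+1)) : ℝ) ≤ (sv (m+1) : ℝ) := by
    exact_mod_cast upper_card m
  have h2 : (sv (m+1) : ℝ) ≤ 2 * (483/200)^(m+1) := (sv_bound m).1
  have h3 : y^(m+1) ≤ (163/200 : ℝ)^(m+1) :=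
    pow_le_pow_left₀ (le_of_lt hy0) (le_of_lt hylt) _
  calc (1/2:ℝ)^(m+1) * (Nat.card ↥(excSet (m+1)) : ℝ) * y^(m+1)
      ≤ (1/2:ℝ)^(m+1) * (2 * (483/200)^(m+1)) * (163/200:ℝ)^(m+1) :=
        mul_le_mul (mul_le_mul_of_nonneg_left (le_trans h1 h2) (by positivity)) h3
          (by positivity) (by positivity)
    _ = 2 * (78729/80000 : ℝ)^(m+1) := by
        rw [show (78729/80000:ℝ) = (1/2)*(483/200)*(163/200) by norm_num,
          mul_pow, mul_pow]
        ring
end
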